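/- arXiv:2402.08773 — 7 statements merged into one kernel-verified Lean document; each statement's English description precedes it below -/
import Mathlib

section
/- Let d ≥ 1 be an integer and let f be a smooth real-valued function on T = [0,1]. Suppose that for parameters C* > 0, N > 0 and S > 0 one has ∫₀¹ (f^{(k)}(x))² dx ≤ (C*·N)^{2k}·S for both k = d−1 and k = d. Let 0 ≤ x₁ < x₂ < ⋯ < x_M ≤ 1 be points such that x_{i+1} − x_i ≥ δ for all i, with δ/2 ≤ x₁ and x_M ≤ 1 − δ/2. Then Σ_{i=1}^M (f^{(d−1)}(x_i))² ≤ (C*·N + δ^{−1})·(C*·N)^{2(d−1)}·S. -/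
/-!
Gallagher's lemma: if `g` is `C¹` and `I` is the interval of length `δ` centred at `c`, then
`g c ^ 2 ≤ δ⁻¹ ∫_I g ^ 2 + ∫_I |g g'|`. On each half of `I`, `g c ^ 2` exceeds the minimum of
`g ^ 2` (at most the average of `g ^ 2` over that half) by at most `∫ |(g ^ 2)'| = 2 ∫ |g g'|`;
averaging the two halves gives the bound. The intervals around `δ`-separated points in
`[δ/2, 1 - δ/2]` are disjoint subintervals of `[0, 1]`, so summing gives
`∑ g (x i) ^ 2 ≤ δ⁻¹ ∫ g ^ 2 + ∫ |g g'|`, and `|g g'| ≤ (w / 2) g ^ 2 + (2 w)⁻¹ g' ^ 2` with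
`w = C* N` and `g = f^{(d-1)}` turns the two moment bounds into the claim.
-/

open MeasureTheory Set
open scoped Interval
open Function

theorem abs_intervalIntegral_le_integral_abs_of_mem_Icc {h : ℝ → ℝ} {a b y c : ℝ}
    (hh : IntervalIntegrable h volume a b) (hy : y ∈ Icc a b) (hc : c ∈ Icc a b) :
    |∫ t in y..c, h t| ≤ ∫ t in a..b, |h t| := by
  have hab : a ≤ b := hy.1.trans hy.2
  have hsub : Ι y c ⊆ Ioc a b := by
    rw [← uIoc_of_le hab]
    exact uIoc_subset_uIoc_of_uIcc_subset_uIcc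
      (uIcc_subset_Icc hy hc |>.trans_eq (uIcc_of_le hab).symm)
  calc |∫ t in y..c, h t| ≤ ∫ t in Ι y c, |h t| := by
        simpa only [Real.norm_eq_abs] using
          intervalIntegral.norm_integral_le_integral_norm_uIoc (f := h) (μ := volume)
    _ ≤ ∫ t in Ioc a b, |h t| :=
        setIntegral_mono_set ((intervalIntegrable_iff_integrableOn_Ioc_of_le hab).1 hh).abs
          (ae_of_all _ fun _ => abs_nonneg _) hsub.eventuallyLE
    _ = ∫ t in a..b, |h t| := (intervalIntegral.integral_of_le hab).symm

section Gallagher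

variable {g G : ℝ → ℝ} (hg : ∀ t, HasDerivAt g (G t) t) (hG : Continuous G)
include hg hG

theorem sq_le_sq_add_two_mul_integral_abs_mul {a b y c : ℝ} (hy : y ∈ Icc a b)
    (hc : c ∈ Icc a b) :
    g c ^ 2 ≤ g y ^ 2 + 2 * ∫ t in a..b, |g t * G t| := by
  have hgc : Continuous g := continuous_iff_continuousAt.2 fun t => (hg t).continuousAt
  have hftc : ∫ t in y..c, 2 * g t * G t = g c ^ 2 - g y ^ 2 :=
    intervalIntegral.integral_eq_sub_of_hasDerivAt
      (fun t _ => by simpa using (hg t).fun_pow 2)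
      (((continuous_const.mul hgc).mul hG).intervalIntegrable y c)
  have hbound := abs_intervalIntegral_le_integral_abs_of_mem_Icc (h := fun t => 2 * g t * G t)
    (((continuous_const.mul hgc).mul hG).intervalIntegrable a b) hy hc
  have htwo : ∫ t in a..b, |2 * g t * G t| = 2 * ∫ t in a..b, |g t * G t| := by
    simp only [mul_assoc, abs_mul, abs_two, intervalIntegral.integral_const_mul]
  linarith [le_abs_self (∫ t in y..c, 2 * g t * G t)]

theorem sq_le_inv_mul_integral_sq_add_two_mul_integral_abs_mul {a b c : ℝ} (hab : a < b)
    (hc : c ∈ Icc a b) :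
    g c ^ 2 ≤ (b - a)⁻¹ * (∫ t in a..b, g t ^ 2) + 2 * ∫ t in a..b, |g t * G t| := by
  have hgc : Continuous g := continuous_iff_continuousAt.2 fun t => (hg t).continuousAt
  obtain ⟨y, hy, hmin⟩ := isCompact_Icc.exists_isMinOn (nonempty_Icc.2 hab.le)
    (hgc.pow 2).continuousOn
  have hlen : 0 < b - a := sub_pos.2 hab
  have hy_le : g y ^ 2 ≤ (b - a)⁻¹ * ∫ t in a..b, g t ^ 2 := by
    rw [le_inv_mul_iff₀ hlen, ← smul_eq_mul, ← intervalIntegral.integral_const]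
    exact intervalIntegral.integral_mono_on hab.le (by simp) ((hgc.pow 2).intervalIntegrable a b)
      fun t ht => hmin ht
  linarith [sq_le_sq_add_two_mul_integral_abs_mul hg hG hy hc]

theorem sq_le_integral_inv_mul_sq_add_abs_mul {δ : ℝ} (hδ : 0 < δ) (c : ℝ) :
    g c ^ 2 ≤ ∫ t in (c - δ / 2)..(c + δ / 2), (δ⁻¹ * g t ^ 2 + |g t * G t|) := by
  have hgc : Continuous g := continuous_iff_continuousAt.2 fun t => (hg t).continuousAt
  have hsq : Continuous fun t => g t ^ 2 := hgc.pow 2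
  have hmul : Continuous fun t => |g t * G t| := (hgc.mul hG).abs
  have hleft := sq_le_inv_mul_integral_sq_add_two_mul_integral_abs_mul hg hG
    (a := c - δ / 2) (b := c) (by linarith) ⟨by linarith, le_rfl⟩
  have hright := sq_le_inv_mul_integral_sq_add_two_mul_integral_abs_mul hg hG
    (a := c) (b := c + δ / 2) (by linarith) ⟨le_rfl, by linarith⟩
  have hhalf : (δ / 2)⁻¹ = 2 * δ⁻¹ := by rw [inv_div, div_eq_mul_inv]
  rw [sub_sub_cancel, hhalf] at hleft
  rw [add_sub_cancel_left, hhalf] at hright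
  rw [intervalIntegral.integral_add ((continuous_const.fun_mul hsq).intervalIntegrable _ _)
      (hmul.intervalIntegrable _ _), intervalIntegral.integral_const_mul,
    ← intervalIntegral.integral_add_adjacent_intervals (hsq.intervalIntegrable _ c)
      (hsq.intervalIntegrable c _),
    ← intervalIntegral.integral_add_adjacent_intervals (hmul.intervalIntegrable _ c)
      (hmul.intervalIntegrable c _)]
  linarith

end Gallagher

theorem sum_setIntegral_le_setIntegral_of_pairwiseDisjoint {α ι : Type*} [MeasurableSpace α]
    {μ : Measure α} {F : α → ℝ} {T : Set α} {I : ι → Set α} (s : Finset ι)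
    (hI : ∀ i ∈ s, MeasurableSet (I i)) (hdisj : Set.Pairwise (↑s) (Disjoint on I))
    (hIT : ∀ i ∈ s, I i ⊆ T) (hF : IntegrableOn F T μ) (hF0 : 0 ≤ᵐ[μ.restrict T] F) :
    ∑ i ∈ s, ∫ t in I i, F t ∂μ ≤ ∫ t in T, F t ∂μ := by
  rw [← integral_biUnion_finset s hI hdisj fun i hi => hF.mono_set (hIT i hi)]
  exact setIntegral_mono_set hF hF0 (Filter.Eventually.of_forall (iUnion₂_subset hIT))

section Separated

variable {x : ℕ → ℝ} {M : ℕ} {δ : ℝ} (hgap : ∀ i, i + 1 < M → δ ≤ x (i + 1) - x i)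
include hgap

theorem gap_le_sub_of_lt (hδ : 0 ≤ δ) {i j : ℕ} (hij : i < j) (hj : j < M) :
    δ ≤ x j - x i := by
  induction j, hij using Nat.le_induction with
  | base => exact hgap i hj
  | succ j hij ih => linarith [ih (by omega), hgap j hj]

theorem le_of_le_of_gap (hδ : 0 ≤ δ) {i j : ℕ} (hij : i ≤ j) (hj : j < M) : x i ≤ x j := by
  rcases hij.eq_or_lt with rfl | hlt
  · rfl
  · linarith [gap_le_sub_of_lt hgap hδ hlt hj]

theorem pairwise_disjoint_Ioc_of_gap (hδ : 0 ≤ δ) :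
    Set.Pairwise ↑(Finset.range M) (Disjoint on fun i => Ioc (x i - δ / 2) (x i + δ / 2)) := by
  intro i hi j hj hij
  rcases hij.lt_or_gt with h | h
  · exact Ioc_disjoint_Ioc_of_le (by linarith [gap_le_sub_of_lt hgap hδ h (Finset.mem_range.1 hj)])
  · exact (Ioc_disjoint_Ioc_of_le
      (by linarith [gap_le_sub_of_lt hgap hδ h (Finset.mem_range.1 hi)])).symm

theorem Ioc_subset_Icc_of_gap (hδ : 0 ≤ δ) {a b : ℝ} (ha : a + δ / 2 ≤ x 0)
    (hb : x (M - 1) ≤ b - δ / 2) {i : ℕ} (hi : i ∈ Finset.range M) :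
    Ioc (x i - δ / 2) (x i + δ / 2) ⊆ Icc a b := by
  have hi : i < M := Finset.mem_range.1 hi
  refine Ioc_subset_Icc_self.trans (Icc_subset_Icc ?_ ?_)
  · linarith [le_of_le_of_gap hgap hδ (Nat.zero_le i) hi]
  · linarith [le_of_le_of_gap hgap hδ (i := i) (j := M - 1) (by omega) (by omega)]

end Separated

theorem setIntegral_mul_sq_add_abs_mul_le {u v : ℝ → ℝ} {s : Set ℝ}
    (hu : ContinuousOn u s) (hv : ContinuousOn v s) (hs : IsCompact s) {c w P : ℝ} (hc : 0 ≤ c)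
    (hw : 0 < w)
    (hu2 : ∫ t in s, u t ^ 2 ≤ P) (hv2 : ∫ t in s, v t ^ 2 ≤ w ^ 2 * P) :
    ∫ t in s, (c * u t ^ 2 + |u t * v t|) ≤ (w + c) * P := by
  have hamgm : ∀ t, |u t * v t| ≤ w / 2 * u t ^ 2 + (2 * w)⁻¹ * v t ^ 2 := by
    intro t
    have := two_mul_le_add_sq (w * |u t|) (|v t|)
    rw [abs_mul]
    field_simp
    nlinarith [sq_abs (u t), sq_abs (v t)]
  have hu2i : IntegrableOn (fun t => u t ^ 2) s := (hu.pow 2).integrableOn_compact hs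
  have hv2i : IntegrableOn (fun t => v t ^ 2) s := (hv.pow 2).integrableOn_compact hs
  calc ∫ t in s, (c * u t ^ 2 + |u t * v t|)
      ≤ ∫ t in s, ((c + w / 2) * u t ^ 2 + (2 * w)⁻¹ * v t ^ 2) := by
        refine setIntegral_mono ((hu2i.const_mul c).add ((hu.mul hv).abs.integrableOn_compact hs))
          ((hu2i.const_mul _).add (hv2i.const_mul _)) fun t => ?_
        linarith [hamgm t]
    _ = (c + w / 2) * (∫ t in s, u t ^ 2) + (2 * w)⁻¹ * ∫ t in s, v t ^ 2 := by
        rw [integral_add (hu2i.const_mul _) (hv2i.const_mul _), integral_const_mul,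
          integral_const_mul]
    _ ≤ (c + w / 2) * P + (2 * w)⁻¹ * (w ^ 2 * P) := by
        gcongr
    _ = (w + c) * P := by
        field_simp
        ring

theorem ContDiff.hasDerivAt_iteratedDeriv {𝕜 : Type*} [NontriviallyNormedField 𝕜] {F : Type*}
    [NormedAddCommGroup F] [NormedSpace 𝕜 F] {f : 𝕜 → F} {n : WithTop ℕ∞} {m : ℕ}
    (hf : ContDiff 𝕜 n f) (hm : m < n) (x : 𝕜) :
    HasDerivAt (iteratedDeriv m f) (iteratedDeriv (m + 1) f x) x := by
  rw [iteratedDeriv_succ]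
  exact (hf.differentiable_iteratedDeriv m hm x).hasDerivAt

theorem restricted_large_sieve_general
    (d : ℕ) (hd : 1 ≤ d) (f : ℝ → ℝ) (hf : ContDiff ℝ (⊤ : ℕ∞) f)
    (Cs N S : ℝ) (hCs : 0 < Cs) (hN : 0 < N)
    (hMB : ∀ k : ℕ, k = d - 1 ∨ k = d →
      (∫ x in Set.Icc (0 : ℝ) 1, (iteratedDeriv k f x) ^ 2) ≤ (Cs * N) ^ (2 * k) * S)
    (M : ℕ) (x : ℕ → ℝ) (δ : ℝ) (hδ : 0 < δ)
    (hgap : ∀ i, i + 1 < M → δ ≤ x (i + 1) - x i)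
    (hx0 : δ / 2 ≤ x 0) (hxM : x (M - 1) ≤ 1 - δ / 2) :
    ∑ i ∈ Finset.range M, (iteratedDeriv (d - 1) f (x i)) ^ 2 ≤
      (Cs * N + δ⁻¹) * (Cs * N) ^ (2 * (d - 1)) * S := by
  obtain ⟨k, rfl⟩ : ∃ k, d = k + 1 := ⟨d - 1, by omega⟩
  rw [Nat.add_sub_cancel] at hMB ⊢
  set g := iteratedDeriv k f
  set G := iteratedDeriv (k + 1) f
  have hg : ∀ t, HasDerivAt g (G t) t := hf.hasDerivAt_iteratedDeriv (mod_cast WithTop.coe_lt_top _)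
  have hgc : Continuous g := hf.continuous_iteratedDeriv _ (mod_cast le_top)
  have hG : Continuous G := hf.continuous_iteratedDeriv _ (mod_cast le_top)
  have hG2 : ∫ t in Icc (0 : ℝ) 1, G t ^ 2 ≤ (Cs * N) ^ 2 * ((Cs * N) ^ (2 * k) * S) :=
    (hMB (k + 1) (Or.inr rfl)).trans_eq (by ring)
  calc ∑ i ∈ Finset.range M, g (x i) ^ 2
      ≤ ∑ i ∈ Finset.range M,
          ∫ t in Ioc (x i - δ / 2) (x i + δ / 2), (δ⁻¹ * g t ^ 2 + |g t * G t|) := by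
        gcongr with i
        rw [← intervalIntegral.integral_of_le (by linarith)]
        exact sq_le_integral_inv_mul_sq_add_abs_mul hg hG hδ (x i)
    _ ≤ ∫ t in Icc 0 1, (δ⁻¹ * g t ^ 2 + |g t * G t|) :=
        sum_setIntegral_le_setIntegral_of_pairwiseDisjoint _ (fun _ _ => measurableSet_Ioc)
          (pairwise_disjoint_Ioc_of_gap hgap hδ.le)
          (fun _ => Ioc_subset_Icc_of_gap hgap hδ.le (by linarith) (by linarith))
          ((continuous_const.mul (hgc.pow 2)).add (hgc.mul hG).abs).integrableOn_Icc
          (ae_of_all _ fun t => by positivity)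
    _ ≤ (Cs * N + δ⁻¹) * ((Cs * N) ^ (2 * k) * S) :=
        setIntegral_mul_sq_add_abs_mul_le hgc.continuousOn hG.continuousOn isCompact_Icc
          (inv_nonneg.2 hδ.le) (mul_pos hCs hN) (hMB k (Or.inl rfl)) hG2
    _ = _ := by ring

/-- restricted large sieve inequality for `δ`-separated points in `[0,1]`. -/
theorem restricted_large_sieve
    (d : ℕ) (hd : 1 ≤ d) (f : ℝ → ℝ) (hf : ContDiff ℝ (⊤ : ℕ∞) f)
    (Cs N S : ℝ) (hCs : 0 < Cs) (hN : 0 < N) (hS : 0 < S)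
    (hMB : ∀ k : ℕ, k = d - 1 ∨ k = d →
      (∫ x in Set.Icc (0 : ℝ) 1, (iteratedDeriv k f x) ^ 2) ≤ (Cs * N) ^ (2 * k) * S)
    (M : ℕ) (hM : 1 ≤ M) (x : ℕ → ℝ) (δ : ℝ) (hδ : 0 < δ)
    (hmem : ∀ i, i < M → x i ∈ Set.Icc (0 : ℝ) 1)
    (hgap : ∀ i, i + 1 < M → δ ≤ x (i + 1) - x i)
    (hx0 : δ / 2 ≤ x 0) (hxM : x (M - 1) ≤ 1 - δ / 2) :
    ∑ i ∈ Finset.range M, (iteratedDeriv (d - 1) f (x i)) ^ 2 ≤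
      (Cs * N + δ⁻¹) * (Cs * N) ^ (2 * (d - 1)) * S :=
  restricted_large_sieve_general d hd f hf Cs N S hCs hN hMB M x δ hδ hgap hx0 hxM
end

section
/- Let m ≥ 2 be an integer, let I be an interval of length r, and let f be a C^∞ real-valued function having at least m distinct zeros in I. Then max_{θ∈I} |f(θ)| ≤ (4er/m)^m · max_{x∈I} |f^{(m)}(x)|, and max_{θ∈I} |f′(θ)| ≤ (4er/(m−1))^{m−1} · max_{x∈I} |f^{(m)}(x)|. -/
/-!
For `θ` not among the zeros `z i`, the function `f - c ∏ (x - z i)` with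
`c = f θ / ∏ (θ - z i)` vanishes at `θ` and at every `z i`, so by repeated Rolle its `m`-th
derivative vanishes at some `ξ`, i.e. `f θ · m! = f⁽ᵐ⁾(ξ) ∏ (θ - z i)`. Hence
`|f θ| ≤ rᵐ / m! · sup |f⁽ᵐ⁾|`, and `rᵐ / m! ≤ (e r / m)ᵐ` because `mᵐ / m! ≤ eᵐ`.
For `f'`, Rolle yields `m - 1` distinct zeros of `f'`, and the same bound applies with `m - 1`.
-/

open Set Polynomial Function
open scoped Nat

theorem exists_injective_deriv_eq_zero {s : Set ℝ} [s.OrdConnected] {f : ℝ → ℝ}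
    (hf : Differentiable ℝ f) {n : ℕ} (z : Fin (n + 1) → ℝ) (hz : Injective z)
    (hzs : ∀ i, z i ∈ s) (hzero : ∀ i, f (z i) = 0) :
    ∃ v : Fin n → ℝ, Injective v ∧ (∀ i, v i ∈ s) ∧ ∀ i, deriv f (v i) = 0 := by
  set w := z ∘ Tuple.sort z
  have hw : StrictMono w :=
    (Tuple.monotone_sort z).strictMono_of_injective (hz.comp (Tuple.sort z).injective)
  have rolle (i : Fin n) : ∃ c ∈ Ioo (w i.castSucc) (w i.succ), deriv f c = 0 :=
    exists_deriv_eq_zero (hw i.castSucc_lt_succ) hf.continuous.continuousOn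
      (by simp only [w, comp_apply, hzero])
  choose v hv hv_zero using rolle
  have hv_mono : StrictMono v := fun i j hij =>
    calc v i < w i.succ := (hv i).2
      _ ≤ w j.castSucc := hw.monotone (Fin.succ_le_castSucc_iff.2 hij)
      _ < v j := (hv j).1
  exact ⟨v, hv_mono.injective,
    fun i => ‹s.OrdConnected›.out (hzs _) (hzs _) (Ioo_subset_Icc_self (hv i)), hv_zero⟩

theorem exists_iteratedDeriv_eq_zero {s : Set ℝ} [s.OrdConnected] {n : ℕ} {f : ℝ → ℝ}
    (hf : ContDiff ℝ n f) (z : Fin (n + 1) → ℝ) (hz : Injective z)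
    (hzs : ∀ i, z i ∈ s) (hzero : ∀ i, f (z i) = 0) :
    ∃ ξ ∈ s, iteratedDeriv n f ξ = 0 := by
  induction n generalizing f with
  | zero => exact ⟨z 0, hzs 0, by simpa using hzero 0⟩
  | succ n ih =>
    rw [Nat.cast_succ, contDiff_succ_iff_deriv] at hf
    obtain ⟨v, hv, hvs, hv_zero⟩ := exists_injective_deriv_eq_zero hf.1 z hz hzs hzero
    simpa only [iteratedDeriv_succ'] using ih hf.2.2 v hv hvs hv_zero

theorem Polynomial.iteratedDeriv_eval {𝕜 : Type*} [NontriviallyNormedField 𝕜] (p : 𝕜[X])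
    (n : ℕ) : iteratedDeriv n (fun x => p.eval x) = fun x => (derivative^[n] p).eval x := by
  induction n generalizing p with
  | zero => simp
  | succ n ih =>
    rw [iteratedDeriv_succ, ih, iterate_succ_apply']
    ext x
    exact Polynomial.deriv _

theorem Polynomial.Monic.iterate_derivative_natDegree {R : Type*} [Semiring R] {p : R[X]}
    (hp : p.Monic) : derivative^[p.natDegree] p = C (p.natDegree ! : R) := by
  have hdeg : (derivative^[p.natDegree] p).natDegree = 0 := by
    simpa using natDegree_iterate_derivative p p.natDegree
  rw [eq_C_of_natDegree_eq_zero hdeg, coeff_iterate_derivative, zero_add,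
    Nat.descFactorial_self, hp.coeff_natDegree, nsmul_one]

theorem exists_mul_factorial_eq_iteratedDeriv_mul_prod {s : Set ℝ} [s.OrdConnected] {n : ℕ}
    {g : ℝ → ℝ} (hg : ContDiff ℝ n g) (z : Fin n → ℝ) (hz : Injective z)
    (hzs : ∀ i, z i ∈ s) (hzero : ∀ i, g (z i) = 0) {θ : ℝ} (hθ : θ ∈ s) :
    ∃ ξ ∈ s, g θ * n ! = iteratedDeriv n g ξ * ∏ i, (θ - z i) := by
  by_cases hθz : ∃ i, z i = θ
  · obtain ⟨i, rfl⟩ := hθz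
    exact ⟨z i, hθ, by simp [hzero, Finset.prod_eq_zero (Finset.mem_univ i)]⟩
  set P := Lagrange.nodal Finset.univ z
  have hPθ : P.eval θ ≠ 0 := by
    rw [Lagrange.eval_nodal]
    exact Finset.prod_ne_zero_iff.2 fun i _ => sub_ne_zero.2 fun h => hθz ⟨i, h.symm⟩
  set c := g θ / P.eval θ
  have hgθ : g θ = c * P.eval θ := (div_mul_cancel₀ _ hPθ).symm
  have hP : ContDiff ℝ n fun x => P.eval x := by simpa using P.contDiff_aeval (𝕜 := ℝ) n
  have hcP : ContDiff ℝ n fun x => c * P.eval x := contDiff_const.mul hP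
  have hPn : iteratedDeriv n (fun x => P.eval x) = fun _ => (n ! : ℝ) := by
    have hdeg : P.natDegree = n := by simp [P, Lagrange.natDegree_nodal]
    rw [iteratedDeriv_eval, ← hdeg, Lagrange.nodal_monic.iterate_derivative_natDegree]
    simp [hdeg]
  obtain ⟨ξ, hξs, hξ⟩ := exists_iteratedDeriv_eq_zero (hg.sub hcP) (Fin.cons θ z)
    (Fin.cons_injective_of_injective (fun ⟨i, hi⟩ => hθz ⟨i, hi⟩) hz) (Fin.cases hθ hzs)
    (Fin.cases (by simp [c, hPθ]) fun i => by
      simp [hzero, P, Lagrange.eval_nodal_at_node (Finset.mem_univ i)])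
  rw [iteratedDeriv_fun_sub hg.contDiffAt hcP.contDiffAt, iteratedDeriv_const_mul_field, hPn,
    sub_eq_zero] at hξ
  refine ⟨ξ, hξs, ?_⟩
  rw [hξ, hgθ, Lagrange.eval_nodal]
  ring

theorem abs_le_pow_div_factorial_mul_of_injective_zeros {a b M : ℝ} {n : ℕ} {g : ℝ → ℝ}
    (hg : ContDiff ℝ n g) (z : Fin n → ℝ) (hz : Injective z) (hzs : ∀ i, z i ∈ Icc a b)
    (hzero : ∀ i, g (z i) = 0) (hM : ∀ x ∈ Icc a b, |iteratedDeriv n g x| ≤ M)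
    {θ : ℝ} (hθ : θ ∈ Icc a b) :
    |g θ| ≤ (b - a) ^ n / n ! * M := by
  obtain ⟨ξ, hξ, hgθ⟩ := exists_mul_factorial_eq_iteratedDeriv_mul_prod hg z hz hzs hzero hθ
  have hprod : |∏ i, (θ - z i)| ≤ (b - a) ^ n := by
    rw [Finset.abs_prod]
    calc ∏ i, |θ - z i| ≤ ∏ _i : Fin n, (b - a) :=
          Finset.prod_le_prod (fun _ _ => abs_nonneg _)
            fun i _ => Real.dist_eq θ (z i) ▸ Real.dist_le_of_mem_Icc hθ (hzs i)
      _ = (b - a) ^ n := by simp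
  rw [div_mul_eq_mul_div, le_div_iff₀ (by positivity)]
  calc |g θ| * n ! = |iteratedDeriv n g ξ| * |∏ i, (θ - z i)| := by
        rw [← Nat.abs_cast, ← abs_mul, hgθ, abs_mul]
    _ ≤ M * (b - a) ^ n :=
        mul_le_mul (hM ξ hξ) hprod (abs_nonneg _) ((abs_nonneg _).trans (hM ξ hξ))
    _ = (b - a) ^ n * M := mul_comm _ _

theorem pow_div_factorial_le_mul_div_pow {r c : ℝ} (hr : 0 ≤ r) (hc : Real.exp 1 ≤ c)
    (n : ℕ) : r ^ n / n ! ≤ (c * r / n) ^ n := by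
  rcases n.eq_zero_or_pos with rfl | hn
  · simp
  have hn' : (0 : ℝ) < n := by exact_mod_cast hn
  have hexp : (n : ℝ) ^ n / n ! ≤ c ^ n := by
    calc (n : ℝ) ^ n / n ! ≤ Real.exp n := Real.pow_div_factorial_le_exp _ hn'.le n
      _ = Real.exp 1 ^ n := by rw [← Real.exp_nat_mul, mul_one]
      _ ≤ c ^ n := pow_le_pow_left₀ (Real.exp_pos 1).le hc n
  calc r ^ n / n ! = (r / n) ^ n * ((n : ℝ) ^ n / n !) := by
        rw [← mul_div_assoc, ← mul_pow, div_mul_cancel₀ _ hn'.ne']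
    _ ≤ (r / n) ^ n * c ^ n := by gcongr
    _ = (c * r / n) ^ n := by rw [← mul_pow, mul_div_assoc, mul_comm]

theorem interpolation_zero_bound_general
    (m : ℕ) (hm : 2 ≤ m) (a b r : ℝ) (hr : r = b - a)
    (f : ℝ → ℝ) (hf : ContDiff ℝ (⊤ : ℕ∞) f)
    (z : Fin m → ℝ) (hz : Function.Injective z)
    (hzmem : ∀ i, z i ∈ Set.Icc a b) (hzero : ∀ i, f (z i) = 0) :
    (∀ θ ∈ Set.Icc a b,
        |f θ| ≤ (4 * Real.exp 1 * r / m) ^ m *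
          ⨆ x : Set.Icc a b, |iteratedDeriv m f x|) ∧
    (∀ θ ∈ Set.Icc a b,
        |deriv f θ| ≤ (4 * Real.exp 1 * r / ((m : ℝ) - 1)) ^ (m - 1) *
          ⨆ x : Set.Icc a b, |iteratedDeriv m f x|) := by
  set M := ⨆ x : Set.Icc a b, |iteratedDeriv m f x|
  have hfm : ContDiff ℝ m f := hf.of_le (by exact_mod_cast le_top)
  have hM : ∀ x ∈ Icc a b, |iteratedDeriv m f x| ≤ M := fun x hx => by
    have hbdd := (isCompact_Icc (a := a) (b := b)).bddAbove_image
      (hfm.continuous_iteratedDeriv m le_rfl).abs.continuousOn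
    rw [image_eq_range] at hbdd
    exact le_ciSup hbdd ⟨x, hx⟩
  have hconst (θ : ℝ) (hθ : θ ∈ Icc a b) (n : ℕ) :
      (b - a) ^ n / n ! * M ≤ (4 * Real.exp 1 * r / n) ^ n * M := by
    refine mul_le_mul_of_nonneg_right ?_ ((abs_nonneg _).trans (hM θ hθ))
    exact hr ▸ pow_div_factorial_le_mul_div_pow (by linarith [hθ.1.trans hθ.2])
      (by linarith [Real.exp_pos 1]) n
  obtain ⟨k, rfl⟩ : ∃ k, m = k + 1 := ⟨m - 1, by omega⟩
  obtain ⟨hf_diff, -, hf_deriv⟩ :=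
    contDiff_succ_iff_deriv.1 (Nat.cast_succ (R := WithTop ℕ∞) k ▸ hfm)
  refine ⟨fun θ hθ => ?_, fun θ hθ => ?_⟩
  · exact (abs_le_pow_div_factorial_mul_of_injective_zeros hfm z hz hzmem hzero hM hθ).trans
      (hconst θ hθ _)
  · obtain ⟨v, hv, hvmem, hv_zero⟩ := exists_injective_deriv_eq_zero hf_diff z hz hzmem hzero
    have hM' : ∀ x ∈ Icc a b, |iteratedDeriv k (deriv f) x| ≤ M := by
      simpa only [iteratedDeriv_succ'] using hM
    simpa using (abs_le_pow_div_factorial_mul_of_injective_zeros hf_deriv v hv hvmem hv_zero hM'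
      hθ).trans (hconst θ hθ k)

/-- Hermite-interpolation bounds for a smooth function with at least `m`
distinct zeros in an interval `I = [a, b]` of length `r`. -/
theorem interpolation_zero_bound
    (m : ℕ) (hm : 2 ≤ m) (a b r : ℝ) (hab : a ≤ b) (hr : r = b - a)
    (f : ℝ → ℝ) (hf : ContDiff ℝ (⊤ : ℕ∞) f)
    (z : Fin m → ℝ) (hz : Function.Injective z)
    (hzmem : ∀ i, z i ∈ Set.Icc a b) (hzero : ∀ i, f (z i) = 0) :
    (∀ θ ∈ Set.Icc a b,
        |f θ| ≤ (4 * Real.exp 1 * r / m) ^ m *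
          ⨆ x : Set.Icc a b, |iteratedDeriv m f x|) ∧
    (∀ θ ∈ Set.Icc a b,
        |deriv f θ| ≤ (4 * Real.exp 1 * r / ((m : ℝ) - 1)) ^ (m - 1) *
          ⨆ x : Set.Icc a b, |iteratedDeriv m f x|) :=
  interpolation_zero_bound_general m hm a b r hr f hf z hz hzmem hzero
end

section
/- Fix strictly positive numbers μ and ν. Let I = (a,b) be an interval of length greater than 2μ/ν, and let f be a C¹ function on I such that at each point x ∈ I either |f(x)| > μ or |f′(x)| > ν. Then for each zero x_i ∈ I of f with x_i − a > μ/ν and b − x_i > μ/ν there exists an interval I(x_i) = (a′,b′) with f(a′)·f(b′) < 0 and |f(a′)| = |f(b′)| = μ, such that x_i ∈ I(x_i) ⊆ (x_i − μ/ν, x_i + μ/ν); moreover the intervals I(x_i) associated to distinct such zeros are pairwise disjoint. -/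
/-!
Where `|f| ≤ μ` the hypothesis forces `|f'| > ν`, so by Darboux's theorem `f'` keeps one sign, and
`f` is strictly monotone, on every interval on which `|f| ≤ μ`. Around a zero `x` of `f`, take the
first points to the right and to the left of `x` where `|f|` reaches `μ`. By the mean value theorem
they lie within `μ / ν` of `x`, and since `f` is monotone between them it takes the values `±μ`
there with opposite signs. Two such intervals that overlap would form one interval on which
`|f| ≤ μ` containing two distinct zeros of `f`, which monotonicity rules out.
-/

open Set

section
variable {α δ : Type*} [ConditionallyCompleteLinearOrder α] [TopologicalSpace α] [OrderTopology α]
  [DenselyOrdered α] [LinearOrder δ] [TopologicalSpace δ] [OrderClosedTopology δ]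
  {g : α → δ} {x y : α} {μ : δ}

theorem ContinuousOn.exists_first_eq (hg : ContinuousOn g (Icc x y)) (hxy : x ≤ y)
    (hx : g x < μ) (hy : μ ≤ g y) :
    ∃ c ∈ Ioc x y, g c = μ ∧ ∀ t ∈ Icc x c, g t ≤ μ := by
  set K := Icc x y ∩ g ⁻¹' Ici μ
  have hK : IsClosed K := hg.preimage_isClosed_of_isClosed isClosed_Icc isClosed_Ici
  have hcK : sInf K ∈ K := hK.csInf_mem ⟨y, ⟨hxy, le_rfl⟩, hy⟩ ⟨x, fun t ht => ht.1.1⟩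
  set c := sInf K
  have hbefore : ∀ t ∈ Ico x c, g t < μ := fun t ht =>
    not_le.1 fun hle => ht.2.not_ge <|
      csInf_le ⟨x, fun s hs => hs.1.1⟩ ⟨⟨ht.1, ht.2.le.trans hcK.1.2⟩, hle⟩
  have hxc : x < c := hcK.1.1.lt_of_ne fun h => (h ▸ hx).not_ge hcK.2
  have hgc : g c = μ := by
    -- a value above `μ` at `c` would be reached, by the intermediate value theorem, before `c`
    by_contra! hne
    have hlt : μ < g c := hcK.2.lt_of_ne' hne
    obtain ⟨t, ht, hgt⟩ := intermediate_value_Icc hxc.le (hg.mono (Icc_subset_Icc_right hcK.1.2))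
      ⟨hx.le, hlt.le⟩
    rcases ht.2.lt_or_eq with htc | rfl
    · exact (hbefore t ⟨ht.1, htc⟩).ne hgt
    · exact hlt.ne' hgt
  refine ⟨c, ⟨hxc, hcK.1.2⟩, hgc, fun t ht => ?_⟩
  rcases ht.2.lt_or_eq with htc | rfl
  exacts [(hbefore t ⟨ht.1, htc⟩).le, hgc.le]

theorem ContinuousOn.exists_last_eq (hg : ContinuousOn g (Icc y x)) (hyx : y ≤ x)
    (hx : g x < μ) (hy : μ ≤ g y) :
    ∃ c ∈ Ico y x, g c = μ ∧ ∀ t ∈ Icc c x, g t ≤ μ := by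
  obtain ⟨c, hc, hgc, hbefore⟩ := ContinuousOn.exists_first_eq (α := αᵒᵈ)
    (g := g ∘ OrderDual.ofDual) (x := OrderDual.toDual x) (y := OrderDual.toDual y)
    (hg.comp continuous_ofDual.continuousOn fun t ht => ⟨ht.2, ht.1⟩) hyx hx hy
  exact ⟨OrderDual.ofDual c, ⟨hc.2, hc.1⟩, hgc,
    fun t ht => hbefore (OrderDual.toDual t) ⟨ht.2, ht.1⟩⟩

end

theorem strictMonoOn_or_strictAntiOn_of_deriv_ne_zero {f : ℝ → ℝ} {s : Set ℝ}
    (hs : Convex ℝ s) (hf : ∀ x ∈ s, DifferentiableAt ℝ f x) (hf' : ∀ x ∈ s, deriv f x ≠ 0) :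
    StrictMonoOn f s ∨ StrictAntiOn f s := by
  have hcont : ContinuousOn f s := fun x hx => (hf x hx).continuousAt.continuousWithinAt
  rcases hasDerivWithinAt_forall_lt_or_forall_gt_of_forall_ne hs
    (fun x hx => (hf x hx).hasDerivAt.hasDerivWithinAt) hf' with hneg | hpos
  · exact .inr <| strictAntiOn_of_deriv_neg hs hcont fun x hx => hneg x (interior_subset hx)
  · exact .inl <| strictMonoOn_of_deriv_pos hs hcont fun x hx => hpos x (interior_subset hx)

section
variable {μ ν : ℝ} {f : ℝ → ℝ} {U : Set ℝ}

theorem strictMonoOn_or_strictAntiOn_of_abs_le (hν : 0 < ν)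
    (hf : ∀ x ∈ U, DifferentiableAt ℝ f x) (hrep : ∀ x ∈ U, μ < |f x| ∨ ν < |deriv f x|)
    {s : Set ℝ} (hs : Convex ℝ s) (hsU : s ⊆ U) (hfs : ∀ x ∈ s, |f x| ≤ μ) :
    StrictMonoOn f s ∨ StrictAntiOn f s :=
  strictMonoOn_or_strictAntiOn_of_deriv_ne_zero hs (fun x hx => hf x (hsU hx)) fun x hx =>
    abs_pos.1 <| hν.trans <| (hrep x (hsU hx)).resolve_left (hfs x hx).not_gt

theorem mul_sub_lt_abs_sub_of_abs_le
    (hf : ∀ x ∈ U, DifferentiableAt ℝ f x) (hrep : ∀ x ∈ U, μ < |f x| ∨ ν < |deriv f x|)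
    {p q : ℝ} (hpq : p < q) (hU : Icc p q ⊆ U) (hfpq : ∀ t ∈ Icc p q, |f t| ≤ μ) :
    ν * (q - p) < |f q - f p| := by
  obtain ⟨ξ, hξ, hslope⟩ := exists_deriv_eq_slope f hpq
    (fun x hx => (hf x (hU hx)).continuousAt.continuousWithinAt)
    (fun x hx => (hf x (hU (Ioo_subset_Icc_self hx))).differentiableWithinAt)
  have hξ' : ν < |deriv f ξ| :=
    (hrep ξ (hU (Ioo_subset_Icc_self hξ))).resolve_left (hfpq ξ (Ioo_subset_Icc_self hξ)).not_gt
  have hqp : 0 < q - p := sub_pos.2 hpq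
  rw [eq_div_iff hqp.ne'] at hslope
  rw [← hslope, abs_mul, abs_of_pos hqp]
  exact mul_lt_mul_of_pos_right hξ' hqp

theorem exists_right_abs_eq (hμ : 0 < μ) (hν : 0 < ν)
    (hf : ∀ x ∈ U, DifferentiableAt ℝ f x) (hrep : ∀ x ∈ U, μ < |f x| ∨ ν < |deriv f x|)
    {x : ℝ} (hx : f x = 0) (hU : Icc x (x + μ / ν) ⊆ U) :
    ∃ c ∈ Ioc x (x + μ / ν), |f c| = μ ∧ ∀ t ∈ Icc x c, |f t| ≤ μ := by
  have hm : x < x + μ / ν := lt_add_of_pos_right x (div_pos hμ hν)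
  obtain ⟨y, hy, hfy⟩ : ∃ y ∈ Icc x (x + μ / ν), μ ≤ |f y| := by
    by_contra! hsmall
    have := mul_sub_lt_abs_sub_of_abs_le hf hrep hm hU fun t ht => (hsmall t ht).le
    rw [hx, sub_zero, add_sub_cancel_left, mul_div_cancel₀ _ hν.ne'] at this
    exact this.not_gt (hsmall _ (right_mem_Icc.2 hm.le))
  have hcont : ContinuousOn (fun t => |f t|) (Icc x y) := fun t ht =>
    (hf t (hU ⟨ht.1, ht.2.trans hy.2⟩)).continuousAt.abs.continuousWithinAt
  obtain ⟨c, hc, hfc, hbefore⟩ := hcont.exists_first_eq hy.1 (by rwa [hx, abs_zero]) hfy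
  exact ⟨c, ⟨hc.1, hc.2.trans hy.2⟩, hfc, hbefore⟩

theorem exists_left_abs_eq (hμ : 0 < μ) (hν : 0 < ν)
    (hf : ∀ x ∈ U, DifferentiableAt ℝ f x) (hrep : ∀ x ∈ U, μ < |f x| ∨ ν < |deriv f x|)
    {x : ℝ} (hx : f x = 0) (hU : Icc (x - μ / ν) x ⊆ U) :
    ∃ c ∈ Ico (x - μ / ν) x, |f c| = μ ∧ ∀ t ∈ Icc c x, |f t| ≤ μ := by
  have hm : x - μ / ν < x := sub_lt_self x (div_pos hμ hν)
  obtain ⟨y, hy, hfy⟩ : ∃ y ∈ Icc (x - μ / ν) x, μ ≤ |f y| := by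
    by_contra! hsmall
    have := mul_sub_lt_abs_sub_of_abs_le hf hrep hm hU fun t ht => (hsmall t ht).le
    rw [hx, zero_sub, abs_neg, sub_sub_cancel, mul_div_cancel₀ _ hν.ne'] at this
    exact this.not_gt (hsmall _ (left_mem_Icc.2 hm.le))
  have hcont : ContinuousOn (fun t => |f t|) (Icc y x) := fun t ht =>
    (hf t (hU ⟨hy.1.trans ht.1, ht.2⟩)).continuousAt.abs.continuousWithinAt
  obtain ⟨c, hc, hfc, hbefore⟩ := hcont.exists_last_eq hy.2 (by rwa [hx, abs_zero]) hfy
  exact ⟨c, ⟨hy.1.trans hc.1, hc.2⟩, hfc, hbefore⟩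

theorem mul_neg_of_abs_le_of_eq_zero (hν : 0 < ν)
    (hf : ∀ x ∈ U, DifferentiableAt ℝ f x) (hrep : ∀ x ∈ U, μ < |f x| ∨ ν < |deriv f x|)
    {l h x : ℝ} (hx : x ∈ Ioo l h) (hfx : f x = 0) (hU : Icc l h ⊆ U)
    (hflh : ∀ t ∈ Icc l h, |f t| ≤ μ) : f l * f h < 0 := by
  have hl : l ∈ Icc l h := left_mem_Icc.2 (hx.1.trans hx.2).le
  have hh : h ∈ Icc l h := right_mem_Icc.2 (hx.1.trans hx.2).le
  have hx' : x ∈ Icc l h := Ioo_subset_Icc_self hx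
  rcases strictMonoOn_or_strictAntiOn_of_abs_le hν hf hrep (convex_Icc l h) hU hflh with
    hmono | hanti
  · exact mul_neg_of_neg_of_pos (hfx ▸ hmono hl hx' hx.1) (hfx ▸ hmono hx' hh hx.2)
  · exact mul_neg_of_pos_of_neg (hfx ▸ hanti hl hx' hx.1) (hfx ▸ hanti hx' hh hx.2)

theorem exists_bracket_of_eq_zero (hμ : 0 < μ) (hν : 0 < ν)
    (hf : ∀ x ∈ U, DifferentiableAt ℝ f x) (hrep : ∀ x ∈ U, μ < |f x| ∨ ν < |deriv f x|)
    {x : ℝ} (hx : f x = 0) (hU : Icc (x - μ / ν) (x + μ / ν) ⊆ U) :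
    ∃ l h, (l < x ∧ x < h ∧ f l * f h < 0 ∧ |f l| = μ ∧ |f h| = μ ∧
      x - μ / ν ≤ l ∧ h ≤ x + μ / ν) ∧ ∀ t ∈ Icc l h, |f t| ≤ μ := by
  obtain ⟨l, hl, hfl, hleft⟩ := exists_left_abs_eq hμ hν hf hrep hx
    ((Icc_subset_Icc_right (le_add_of_nonneg_right (div_pos hμ hν).le)).trans hU)
  obtain ⟨h, hh, hfh, hright⟩ := exists_right_abs_eq hμ hν hf hrep hx
    ((Icc_subset_Icc_left (sub_le_self x (div_pos hμ hν).le)).trans hU)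
  have hbound : ∀ t ∈ Icc l h, |f t| ≤ μ := fun t ht => by
    rcases le_total t x with htx | hxt
    exacts [hleft t ⟨ht.1, htx⟩, hright t ⟨hxt, ht.2⟩]
  have hsign : f l * f h < 0 := mul_neg_of_abs_le_of_eq_zero hν hf hrep ⟨hl.2, hh.1⟩ hx
    ((Icc_subset_Icc hl.1 hh.2).trans hU) hbound
  exact ⟨l, h, ⟨hl.2, hh.1, hsign, hfl, hfh, hl.1, hh.2⟩, hbound⟩

theorem disjoint_Ioo_of_abs_le (hν : 0 < ν)
    (hf : ∀ x ∈ U, DifferentiableAt ℝ f x) (hrep : ∀ x ∈ U, μ < |f x| ∨ ν < |deriv f x|)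
    {l₁ h₁ l₂ h₂ x y : ℝ} (hx : x ∈ Ioo l₁ h₁) (hy : y ∈ Ioo l₂ h₂) (hfx : f x = 0)
    (hfy : f y = 0) (hxy : x ≠ y) (hU₁ : Ioo l₁ h₁ ⊆ U) (hU₂ : Ioo l₂ h₂ ⊆ U)
    (hf₁ : ∀ t ∈ Ioo l₁ h₁, |f t| ≤ μ) (hf₂ : ∀ t ∈ Ioo l₂ h₂, |f t| ≤ μ) :
    Disjoint (Ioo l₁ h₁) (Ioo l₂ h₂) := by
  -- on the union of two overlapping intervals `f` is still monotone, so it has only one zero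
  refine Set.disjoint_left.2 fun z hz₁ hz₂ => hxy ?_
  have hconv : Convex ℝ (Ioo l₁ h₁ ∪ Ioo l₂ h₂) :=
    (isPreconnected_iff_ordConnected.1
      (isPreconnected_Ioo.union z hz₁ hz₂ isPreconnected_Ioo)).convex
  have hinj : InjOn f (Ioo l₁ h₁ ∪ Ioo l₂ h₂) := by
    rcases strictMonoOn_or_strictAntiOn_of_abs_le hν hf hrep hconv (union_subset hU₁ hU₂)
      (fun t ht => ht.elim (hf₁ t) (hf₂ t)) with hmono | hanti
    exacts [hmono.injOn, hanti.injOn]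
  exact hinj (.inl hx) (.inr hy) (hfx.trans hfy.symm)

end

theorem stability_intervals_general
    (μ ν : ℝ) (hμ : 0 < μ) (hν : 0 < ν)
    (a b : ℝ)
    (f : ℝ → ℝ) (hf : ContDiffOn ℝ 1 f (Set.Ioo a b))
    (hrep : ∀ x ∈ Set.Ioo a b, μ < |f x| ∨ ν < |deriv f x|) :
    ∃ lo hi : ℝ → ℝ,
      (∀ x ∈ Set.Ioo a b, f x = 0 → μ / ν < x - a → μ / ν < b - x →
        lo x < x ∧ x < hi x ∧
        f (lo x) * f (hi x) < 0 ∧ |f (lo x)| = μ ∧ |f (hi x)| = μ ∧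
        x - μ / ν ≤ lo x ∧ hi x ≤ x + μ / ν) ∧
      (∀ x ∈ Set.Ioo a b, ∀ y ∈ Set.Ioo a b,
        f x = 0 → f y = 0 →
        μ / ν < x - a → μ / ν < b - x → μ / ν < y - a → μ / ν < b - y →
        x ≠ y →
        Disjoint (Set.Ioo (lo x) (hi x)) (Set.Ioo (lo y) (hi y))) := by
  have hdiff : ∀ x ∈ Ioo a b, DifferentiableAt ℝ f x := fun x hx =>
    (hf.differentiableOn one_ne_zero x hx).differentiableAt (isOpen_Ioo.mem_nhds hx)
  have key : ∀ x ∈ Ioo a b, f x = 0 → μ / ν < x - a → μ / ν < b - x →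
      ∃ l h, (l < x ∧ x < h ∧ f l * f h < 0 ∧ |f l| = μ ∧ |f h| = μ ∧
        x - μ / ν ≤ l ∧ h ≤ x + μ / ν) ∧ ∀ t ∈ Icc l h, |f t| ≤ μ := fun x _ hx hxa hxb =>
    exists_bracket_of_eq_zero hμ hν hdiff hrep hx (Icc_subset_Ioo (by linarith) (by linarith))
  choose! lo hi hspec hbound using key
  have hIoo : ∀ x ∈ Ioo a b, f x = 0 → μ / ν < x - a → μ / ν < b - x →
      x ∈ Ioo (lo x) (hi x) ∧ Ioo (lo x) (hi x) ⊆ Ioo a b ∧ ∀ t ∈ Ioo (lo x) (hi x), |f t| ≤ μ :=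
    fun x hx hx0 hxa hxb => by
      obtain ⟨hlx, hxh, -, -, -, hlo, hhi⟩ := hspec x hx hx0 hxa hxb
      exact ⟨⟨hlx, hxh⟩, Ioo_subset_Ioo (by linarith) (by linarith),
        fun t ht => hbound x hx hx0 hxa hxb t (Ioo_subset_Icc_self ht)⟩
  refine ⟨lo, hi, hspec, fun x hx y hy hx0 hy0 hxa hxb hya hyb hne => ?_⟩
  obtain ⟨hx', hxU, hxμ⟩ := hIoo x hx hx0 hxa hxb
  obtain ⟨hy', hyU, hyμ⟩ := hIoo y hy hy0 hya hyb
  exact disjoint_Ioo_of_abs_le hν hdiff hrep hx' hy' hx0 hy0 hne hxU hyU hxμ hyμ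

/-- stability lemma. If everywhere on `I = (a, b)` either `|f| > μ` or
`|f'| > ν`, then each zero of `f` deep inside `I` lies in an interval with endpoints
where `f` takes the values `±μ` with opposite signs, and these intervals are disjoint. -/
theorem stability_intervals
    (μ ν : ℝ) (hμ : 0 < μ) (hν : 0 < ν)
    (a b : ℝ) (hlen : 2 * μ / ν < b - a)
    (f : ℝ → ℝ) (hf : ContDiffOn ℝ 1 f (Set.Ioo a b))
    (hrep : ∀ x ∈ Set.Ioo a b, μ < |f x| ∨ ν < |deriv f x|) :
    ∃ lo hi : ℝ → ℝ,
      (∀ x ∈ Set.Ioo a b, f x = 0 → μ / ν < x - a → μ / ν < b - x →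
        lo x < x ∧ x < hi x ∧
        f (lo x) * f (hi x) < 0 ∧ |f (lo x)| = μ ∧ |f (hi x)| = μ ∧
        x - μ / ν ≤ lo x ∧ hi x ≤ x + μ / ν) ∧
      (∀ x ∈ Set.Ioo a b, ∀ y ∈ Set.Ioo a b,
        f x = 0 → f y = 0 →
        μ / ν < x - a → μ / ν < b - x → μ / ν < y - a → μ / ν < b - y →
        x ≠ y →
        Disjoint (Set.Ioo (lo x) (hi x)) (Set.Ioo (lo y) (hi y))) :=
  stability_intervals_general μ ν hμ hν a b f hf hrep
end

section
/- There exists an absolute constant C > 0 such that the following holds. Let ε₀ ∈ (0, 1/2], let a < b be reals, and set a′ = a − ε₀(b−a) and b′ = b + ε₀(b−a). Then for every real polynomial f of degree at most n and every integer 1 ≤ k ≤ n, ∫_a^b (f^{(k)}(x))² dx ≤ C^k · (ε₀·(b′−a′)²)^{−k} · n^{2k} · ∫_{a′}^{b′} f(x)² dx. -/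
/-!
On `[-1, 1]` integration by parts gives `∫ (1 - x²)^(m+1) u' v' = ∫ (1 - x²)^m (L_m u) v`
for the Gegenbauer operator `L_m`. Its eigenvectors are the orthogonal polynomials for the weight
`(1 - x²)^m` (Rodrigues' formula), with eigenvalues `j (j + 2m + 1)`, so expanding in them gives
`∫ (1 - x²)^(m+1) q'² ≤ n (n + 2m + 1) ∫ (1 - x²)^m q²` for `deg q ≤ n`. Iterating from `m = 0`
to `m = k` gives `∫ (1 - x²)^k (q⁽ᵏ⁾)² ≤ (3n²)^k ∫ q²`. The affine map taking `[a', b']` onto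
`[-1, 1]` takes `[a, b]` to `[-t, t]` with `1 - t² ≥ ε₀`, where the weight is at least `ε₀^k`.
-/

open Polynomial

namespace L2Bernstein

noncomputable def integralUnit : ℝ[X] →ₗ[ℝ] ℝ where
  toFun p := ∫ x in (-1 : ℝ)..1, p.eval x
  map_add' p q := by
    simp only [eval_add]
    exact intervalIntegral.integral_add (p.continuous.intervalIntegrable _ _)
      (q.continuous.intervalIntegrable _ _)
  map_smul' c p := by simp [intervalIntegral.integral_const_mul]

@[simp]
lemma integralUnit_apply (p : ℝ[X]) : integralUnit p = ∫ x in (-1 : ℝ)..1, p.eval x := rfl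

@[simp]
lemma integralUnit_C_mul (a : ℝ) (p : ℝ[X]) : integralUnit (C a * p) = a * integralUnit p := by
  rw [← smul_eq_C_mul, map_smul, smul_eq_mul]

lemma integralUnit_mul_add_C_mul_sq (w u v : ℝ[X]) (c : ℝ) :
    integralUnit (w * (u + C c * v) ^ 2) = integralUnit (w * u ^ 2)
      + 2 * c * integralUnit (w * v * u) + c ^ 2 * integralUnit (w * v * v) := by
  have h : w * (u + C c * v) ^ 2 =
      w * u ^ 2 + C (2 * c) * (w * v * u) + C (c ^ 2) * (w * v * v) := by
    simp only [map_mul, map_pow, map_ofNat]; ring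
  rw [h, map_add, map_add, integralUnit_C_mul, integralUnit_C_mul]

lemma integralUnit_derivative (u : ℝ[X]) :
    integralUnit (derivative u) = u.eval 1 - u.eval (-1) := by
  have hderiv : deriv (fun x => u.eval x) = fun x => (derivative u).eval x :=
    _root_.funext fun x => u.deriv (x := x)
  rw [integralUnit_apply, ← hderiv]
  exact intervalIntegral.integral_deriv_eq_sub (fun x _ => u.differentiableAt)
    (hderiv ▸ (derivative u).continuous.intervalIntegrable _ _)

lemma integralUnit_derivative_mul_of_isRoot {u : ℝ[X]} (h₁ : u.IsRoot 1) (h₂ : u.IsRoot (-1))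
    (v : ℝ[X]) : integralUnit (derivative u * v) = -integralUnit (u * derivative v) := by
  have h := integralUnit_derivative (u * v)
  rw [derivative_mul, map_add] at h
  simp only [eval_mul, h₁.eq_zero, h₂.eq_zero, zero_mul, sub_self] at h
  linarith

noncomputable def weight (m : ℕ) : ℝ[X] := (1 - X ^ 2) ^ m

lemma natDegree_weight (m : ℕ) : (weight m).natDegree = 2 * m := by
  rw [weight, natDegree_pow, mul_comm]
  congr 1
  compute_degree!

lemma eval_weight (m : ℕ) (x : ℝ) : (weight m).eval x = (1 - x ^ 2) ^ m := by
  simp [weight]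

lemma weight_ne_zero (m : ℕ) : weight m ≠ 0 := fun h => by
  simpa [h] using eval_weight m 0

lemma isRoot_iterate_derivative_weight {s i : ℕ} (hi : i < s) {x : ℝ} (hx : x ^ 2 = 1) :
    (derivative^[i] (weight s)).IsRoot x := by
  refine IsRoot.dvd ?_ (pow_sub_dvd_iterate_derivative_pow _ s i)
  simp [hx, Nat.sub_ne_zero_of_lt hi]

lemma eval_weight_mul_sq_nonneg (m : ℕ) (q : ℝ[X]) {x : ℝ} (hx : x ∈ Set.Icc (-1) 1) :
    0 ≤ (weight m * q ^ 2).eval x := by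
  have : 0 ≤ 1 - x ^ 2 := by nlinarith [hx.1, hx.2]
  simp only [eval_mul, eval_weight, eval_pow]
  positivity

lemma integralUnit_weight_mul_sq_nonneg (m : ℕ) (q : ℝ[X]) :
    0 ≤ integralUnit (weight m * q ^ 2) :=
  intervalIntegral.integral_nonneg (by norm_num) fun _ hx => eval_weight_mul_sq_nonneg m q hx

lemma integralUnit_iterate_derivative_weight_mul_eq_zero {s j : ℕ} (hj : j ≤ s) {r : ℝ[X]}
    (hr : derivative^[j] r = 0) : integralUnit (derivative^[j] (weight s) * r) = 0 := by
  induction j generalizing r with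
  | zero => simp_all
  | succ j ih =>
    rw [Function.iterate_succ_apply',
      integralUnit_derivative_mul_of_isRoot (isRoot_iterate_derivative_weight hj (by norm_num))
        (isRoot_iterate_derivative_weight hj (by norm_num)),
      ih (by omega) (by rwa [← Function.iterate_succ_apply]), neg_zero]

lemma natDegree_iterate_derivative_eq {R : Type*} [Semiring R] [IsAddTorsionFree R] (p : R[X])
    (i : ℕ) :
    (derivative^[i] p).natDegree = p.natDegree - i := by
  induction i with
  | zero => simp
  | succ i ih => simp [Function.iterate_succ_apply', ih, Nat.sub_sub]

/-- Rodrigues' formula: `D^(n+1) (1 - x²)^(m+n+1) = (1 - x²)^m g` with `g` the Gegenbauer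
polynomial of degree `n + 1` for the weight `(1 - x²)^m`. -/
lemma exists_orthogonal (m n : ℕ) : ∃ g : ℝ[X], g.natDegree = n + 1 ∧
    ∀ w : ℝ[X], w.natDegree ≤ n → integralUnit (weight m * g * w) = 0 := by
  obtain ⟨g, hg⟩ := pow_sub_dvd_iterate_derivative_pow (1 - X ^ 2 : ℝ[X]) (m + (n + 1)) (n + 1)
  rw [Nat.add_sub_cancel, ← weight, ← weight] at hg
  have hdeg : (weight m * g).natDegree = 2 * m + (n + 1) := by
    rw [← hg, natDegree_iterate_derivative_eq, natDegree_weight]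
    omega
  have hg0 : g ≠ 0 := by rintro rfl; simp at hdeg
  refine ⟨g, ?_, fun w hw => ?_⟩
  · rw [natDegree_mul (weight_ne_zero m) hg0, natDegree_weight] at hdeg
    omega
  · rw [← hg]
    exact integralUnit_iterate_derivative_weight_mul_eq_zero (by omega)
      (iterate_derivative_eq_zero (by omega))

/-- Minus the Gegenbauer differential operator with parameter `m + 1/2`, whose eigenvalue on the
degree `j` Gegenbauer polynomial is `eigenvalue m j`. -/
noncomputable def gegenbauerOp (m : ℕ) (u : ℝ[X]) : ℝ[X] :=
  C (2 * (m + 1 : ℝ)) * X * derivative u - (1 - X ^ 2) * derivative (derivative u)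

def eigenvalue (m j : ℕ) : ℝ := j * (j + 2 * m + 1)

lemma derivative_weight_succ_mul_derivative (m : ℕ) (u : ℝ[X]) :
    derivative (weight (m + 1) * derivative u) = -(weight m * gegenbauerOp m u) := by
  simp only [weight, gegenbauerOp, derivative_mul, derivative_pow, derivative_sub, derivative_one,
    derivative_X, map_mul, map_add, map_natCast, map_one, map_ofNat]
  push_cast
  ring

lemma integralUnit_weight_mul_derivative_mul_derivative (m : ℕ) (u v : ℝ[X]) :
    integralUnit (weight (m + 1) * derivative u * derivative v) =
      integralUnit (weight m * gegenbauerOp m u * v) := by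
  have hroot {x : ℝ} (hx : x ^ 2 = 1) : (weight (m + 1) * derivative u).IsRoot x :=
    (isRoot_iterate_derivative_weight (i := 0) (Nat.succ_pos m) hx).dvd (dvd_mul_right _ _)
  have h := integralUnit_derivative_mul_of_isRoot (hroot (by norm_num)) (hroot (by norm_num)) v
  rw [derivative_weight_succ_mul_derivative, neg_mul, map_neg, neg_inj] at h
  exact h.symm

lemma coeff_gegenbauerOp (m : ℕ) (u : ℝ[X]) (i : ℕ) :
    (gegenbauerOp m u).coeff i =
      eigenvalue m i * u.coeff i - (i + 1) * (i + 2) * u.coeff (i + 2) := by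
  have h : gegenbauerOp m u = C (2 * (m + 1 : ℝ)) * (X * derivative u)
      + X ^ 2 * derivative (derivative u) - derivative (derivative u) := by
    rw [gegenbauerOp]; ring
  rw [h, coeff_sub, coeff_add, coeff_C_mul, eigenvalue]
  rcases i with _ | _ | i <;>
    simp [coeff_X_mul, coeff_X_pow_mul', coeff_derivative] <;> ring

lemma natDegree_gegenbauerOp_sub_le (m : ℕ) {u : ℝ[X]} {n : ℕ} (hu : u.natDegree ≤ n + 1) :
    (gegenbauerOp m u - C (eigenvalue m (n + 1)) * u).natDegree ≤ n :=
  natDegree_le_iff_coeff_eq_zero.2 fun N hN => by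
    rw [coeff_sub, coeff_C_mul, coeff_gegenbauerOp,
      coeff_eq_zero_of_natDegree_lt (p := u) (n := N + 2) (by omega)]
    obtain rfl | hN := (show N = n + 1 ∨ n + 1 < N by omega)
    · ring
    · rw [coeff_eq_zero_of_natDegree_lt (by omega)]; ring

lemma eigenvalue_le_succ (m n : ℕ) : eigenvalue m n ≤ eigenvalue m (n + 1) := by
  simp only [eigenvalue]; push_cast; nlinarith

/-- A polynomial orthogonal to degree `≤ n` is a weak eigenvector of `gegenbauerOp m`, tested
against degree `≤ n + 1`. -/
lemma integralUnit_weight_mul_derivative_mul_derivative_of_orthogonal {m n : ℕ} {g : ℝ[X]}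
    (horth : ∀ w : ℝ[X], w.natDegree ≤ n → integralUnit (weight m * g * w) = 0)
    {r : ℝ[X]} (hr : r.natDegree ≤ n + 1) :
    integralUnit (weight (m + 1) * derivative g * derivative r) =
      eigenvalue m (n + 1) * integralUnit (weight m * g * r) := by
  have hsplit : weight m * gegenbauerOp m r * g = C (eigenvalue m (n + 1)) * (weight m * g * r)
      + weight m * g * (gegenbauerOp m r - C (eigenvalue m (n + 1)) * r) := by ring
  rw [mul_right_comm, integralUnit_weight_mul_derivative_mul_derivative, hsplit, map_add,
    integralUnit_C_mul, horth _ (natDegree_gegenbauerOp_sub_le m hr), add_zero]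

theorem integralUnit_weight_succ_mul_derivative_sq_le (m : ℕ) {n : ℕ} {q : ℝ[X]}
    (hq : q.natDegree ≤ n) :
    integralUnit (weight (m + 1) * derivative q ^ 2) ≤
      eigenvalue m n * integralUnit (weight m * q ^ 2) := by
  induction n generalizing q with
  | zero => simp [eigenvalue, derivative_of_natDegree_zero (Nat.le_zero.1 hq)]
  | succ n ih =>
    -- Split `q = r + c g` along the orthogonal polynomial `g`; both quadratic forms are diagonal.
    obtain ⟨g, hg, horth⟩ := exists_orthogonal m n
    have hlead : g.coeff (n + 1) ≠ 0 := by
      rw [← hg]; exact leadingCoeff_ne_zero.2 (by rintro rfl; simp at hg)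
    set c := q.coeff (n + 1) / g.coeff (n + 1)
    set r := q - C c * g
    have hr : r.natDegree ≤ n := natDegree_le_iff_coeff_eq_zero.2 fun N hN => by
      obtain rfl | hN := (show N = n + 1 ∨ n + 1 < N by omega)
      · simp [r, c, coeff_sub, coeff_C_mul, hlead]
      · simp [r, coeff_sub, coeff_C_mul, coeff_eq_zero_of_natDegree_lt (hq.trans_lt hN),
          coeff_eq_zero_of_natDegree_lt (hg.trans_lt hN)]
    have hq_eq : q = r + C c * g := by ring
    have hgr : integralUnit (weight m * g * r) = 0 := horth r hr
    have heig {u : ℝ[X]} (hu : u.natDegree ≤ n + 1) :=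
      integralUnit_weight_mul_derivative_mul_derivative_of_orthogonal horth hu
    have hL2 : integralUnit (weight m * q ^ 2) =
        integralUnit (weight m * r ^ 2) + c ^ 2 * integralUnit (weight m * g * g) := by
      rw [hq_eq, integralUnit_mul_add_C_mul_sq, hgr]
      ring
    have hH1 : integralUnit (weight (m + 1) * derivative q ^ 2) =
        integralUnit (weight (m + 1) * derivative r ^ 2)
          + c ^ 2 * (eigenvalue m (n + 1) * integralUnit (weight m * g * g)) := by
      rw [hq_eq, derivative_add, derivative_C_mul, integralUnit_mul_add_C_mul_sq, heig (by omega),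
        heig hg.le, hgr]
      ring
    have hr_bound := (ih hr).trans (mul_le_mul_of_nonneg_right (eigenvalue_le_succ m n)
      (integralUnit_weight_mul_sq_nonneg m r))
    rw [hH1, hL2]
    linarith

lemma eigenvalue_le_three_mul_sq {m n : ℕ} (h : m < n) : eigenvalue m n ≤ 3 * n ^ 2 := by
  have : (m : ℝ) + 1 ≤ n := by exact_mod_cast h
  simp only [eigenvalue]
  nlinarith

theorem integralUnit_weight_mul_iterate_derivative_sq_le {n : ℕ} {q : ℝ[X]}
    (hq : q.natDegree ≤ n) {k : ℕ} (hk : k ≤ n) :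
    integralUnit (weight k * (derivative^[k] q) ^ 2) ≤ (3 * n ^ 2) ^ k * integralUnit (q ^ 2) := by
  induction k with
  | zero => simp [weight]
  | succ k ih =>
    rw [Function.iterate_succ_apply']
    calc integralUnit (weight (k + 1) * derivative (derivative^[k] q) ^ 2)
        ≤ eigenvalue k n * integralUnit (weight k * (derivative^[k] q) ^ 2) :=
          integralUnit_weight_succ_mul_derivative_sq_le k
            ((natDegree_iterate_derivative q k).trans (by omega))
      _ ≤ 3 * n ^ 2 * ((3 * n ^ 2) ^ k * integralUnit (q ^ 2)) :=
          mul_le_mul (eigenvalue_le_three_mul_sq hk) (ih (by omega))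
            (integralUnit_weight_mul_sq_nonneg _ _) (by positivity)
      _ = (3 * n ^ 2) ^ (k + 1) * integralUnit (q ^ 2) := by ring

/-- On `[-t, t]` the weight `(1 - x²)^k` is at least `ε ^ k`. -/
lemma integral_sq_le_integralUnit_weight_mul_sq {t ε : ℝ} (ht : 0 ≤ t) (hε : 0 < ε)
    (hεt : ε ≤ 1 - t ^ 2) (k : ℕ) (u : ℝ[X]) :
    ∫ x in -t..t, u.eval x ^ 2 ≤ (ε ^ k)⁻¹ * integralUnit (weight k * u ^ 2) := by
  have hcont (p : ℝ[X]) (a b : ℝ) :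
      IntervalIntegrable (fun x => p.eval x) MeasureTheory.volume a b :=
    p.continuous.intervalIntegrable a b
  calc ∫ x in -t..t, u.eval x ^ 2
      ≤ ∫ x in -t..t, (ε ^ k)⁻¹ * (weight k * u ^ 2).eval x := by
        refine intervalIntegral.integral_mono_on (by linarith)
          ((u.continuous.pow 2).intervalIntegrable _ _) ((hcont _ _ _).const_mul _) fun x hx => ?_
        have hx2 : ε ≤ 1 - x ^ 2 := by nlinarith [hx.1, hx.2]
        rw [le_inv_mul_iff₀ (by positivity), eval_mul, eval_weight, eval_pow]
        exact mul_le_mul_of_nonneg_right (pow_le_pow_left₀ hε.le hx2 k) (sq_nonneg _)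
    _ = (ε ^ k)⁻¹ * ∫ x in -t..t, (weight k * u ^ 2).eval x :=
        intervalIntegral.integral_const_mul _ _
    _ ≤ (ε ^ k)⁻¹ * integralUnit (weight k * u ^ 2) := by
        refine mul_le_mul_of_nonneg_left ?_ (by positivity)
        refine intervalIntegral.integral_mono_interval (by nlinarith) (by linarith) (by nlinarith)
          (MeasureTheory.ae_restrict_of_forall_mem measurableSet_Ioc fun x hx =>
            eval_weight_mul_sq_nonneg k u (Set.Ioc_subset_Icc_self hx)) (hcont _ _ _)

lemma iteratedDeriv_eval_eq (p : ℝ[X]) (k : ℕ) :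
    iteratedDeriv k (fun x => p.eval x) = fun x => (derivative^[k] p).eval x := by
  induction k with
  | zero => simp
  | succ k ih =>
    rw [iteratedDeriv_succ, ih, Function.iterate_succ_apply']
    exact _root_.funext fun x => Polynomial.deriv _

lemma iterate_derivative_comp_affine (p : ℝ[X]) (c h : ℝ) (k : ℕ) :
    derivative^[k] (p.comp (C c + C h * X)) =
      C (h ^ k) * (derivative^[k] p).comp (C c + C h * X) := by
  induction k with
  | zero => simp
  | succ k ih =>
    rw [Function.iterate_succ_apply', ih, derivative_C_mul, derivative_comp,
      Function.iterate_succ_apply', pow_succ, map_mul]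
    simp only [derivative_add, derivative_C, derivative_C_mul_X, zero_add]
    ring

lemma integral_eval_comp_affine (f : ℝ[X]) {h : ℝ} (hh : h ≠ 0) (c t : ℝ) :
    ∫ u in -t..t, (f.comp (C c + C h * X)).eval u =
      h⁻¹ * ∫ x in c - t * h..c + t * h, f.eval x := by
  have := intervalIntegral.integral_comp_add_mul (fun x => f.eval x) hh c (a := -t) (b := t)
  simp only [eval_comp, eval_add, eval_C, eval_mul, eval_X, smul_eq_mul] at this ⊢
  rw [this, show c + h * -t = c - t * h by ring, mul_comm h t]

theorem integral_iterate_derivative_sq_le {n : ℕ} {p : ℝ[X]} (hp : p.natDegree ≤ n) {k : ℕ}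
    (hk : k ≤ n) {c h t ε : ℝ} (hh : 0 < h) (ht : 0 ≤ t) (hε : 0 < ε) (hεt : ε ≤ 1 - t ^ 2) :
    ∫ x in c - t * h..c + t * h, (derivative^[k] p).eval x ^ 2 ≤
      (3 * n ^ 2) ^ k * ((ε * h ^ 2) ^ k)⁻¹ * ∫ x in c - h..c + h, p.eval x ^ 2 := by
  set q := p.comp (C c + C h * X)
  have hq : q.natDegree ≤ n := natDegree_comp_le.trans <| by
    have : (C c + C h * X).natDegree ≤ 1 := by compute_degree
    nlinarith
  have key := (integral_sq_le_integralUnit_weight_mul_sq ht hε hεt k (derivative^[k] q)).trans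
    (mul_le_mul_of_nonneg_left (integralUnit_weight_mul_iterate_derivative_sq_le hq hk)
      (by positivity))
  have hlhs : ∫ x in -t..t, (derivative^[k] q).eval x ^ 2 =
      (h ^ k) ^ 2 * (h⁻¹ * ∫ x in c - t * h..c + t * h, (derivative^[k] p).eval x ^ 2) := by
    have hpt (x : ℝ) : (derivative^[k] q).eval x ^ 2 =
        (h ^ k) ^ 2 * (((derivative^[k] p) ^ 2).comp (C c + C h * X)).eval x := by
      simp only [q, iterate_derivative_comp_affine, eval_mul, eval_C, eval_comp, eval_pow, mul_pow]
    simp only [hpt, intervalIntegral.integral_const_mul, integral_eval_comp_affine _ hh.ne',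
      eval_pow]
  have hrhs : integralUnit (q ^ 2) = h⁻¹ * ∫ x in c - h..c + h, p.eval x ^ 2 := by
    rw [integralUnit_apply, ← pow_comp, integral_eval_comp_affine _ hh.ne', one_mul]
    simp only [eval_pow]
  rw [hlhs, hrhs, ← mul_assoc, ← le_inv_mul_iff₀ (by positivity)] at key
  refine key.trans_eq ?_
  field_simp
  ring

theorem integral_iterate_derivative_sq_le_enlargement {n : ℕ} {p : ℝ[X]} (hp : p.natDegree ≤ n)
    {k : ℕ} (hk : k ≤ n) {ε a b : ℝ} (hε : 0 < ε) (hε' : ε ≤ 1 / 2) (hab : a < b) :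
    ∫ x in a..b, (derivative^[k] p).eval x ^ 2 ≤
      12 ^ k * ((ε * ((b + ε * (b - a)) - (a - ε * (b - a))) ^ 2) ^ k)⁻¹ * (n : ℝ) ^ (2 * k) *
        ∫ x in a - ε * (b - a)..b + ε * (b - a), p.eval x ^ 2 := by
  have hs : 0 < 1 + 2 * ε := by linarith
  have hεt : ε ≤ 1 - ((1 + 2 * ε)⁻¹) ^ 2 := by
    have hsq : ε * ε ≤ 1 / 4 := by nlinarith
    rw [inv_pow, le_sub_comm, ← one_div, div_le_iff₀ (by positivity)]
    nlinarith [mul_le_mul_of_nonneg_left hsq hε.le]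
  have key := integral_iterate_derivative_sq_le hp hk (c := (a + b) / 2)
    (h := (1 + 2 * ε) * (b - a) / 2) (by nlinarith) (by positivity) hε hεt
  have hlo : (a + b) / 2 - (1 + 2 * ε)⁻¹ * ((1 + 2 * ε) * (b - a) / 2) = a := by
    field_simp; ring
  have hhi : (a + b) / 2 + (1 + 2 * ε)⁻¹ * ((1 + 2 * ε) * (b - a) / 2) = b := by
    field_simp; ring
  rw [hlo, hhi] at key
  convert key using 2
  · rw [show b + ε * (b - a) - (a - ε * (b - a)) = 2 * ((1 + 2 * ε) * (b - a) / 2) by ring]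
    generalize (1 + 2 * ε) * (b - a) / 2 = H
    rw [show ε * (2 * H) ^ 2 = 4 * (ε * H ^ 2) by ring, show (12 : ℝ) = 3 * 4 by norm_num,
      mul_pow, mul_pow, mul_pow, mul_inv, pow_mul]
    field_simp
    ring
  · congr 1 <;> ring

end L2Bernstein

/-- iterated L² Bernstein-type inequality for polynomials, on an interval
`[a,b]` compared with its `ε₀`-enlargement `[a′,b′]`. -/
theorem iterated_bernstein :
    ∃ C : ℝ, 0 < C ∧
    ∀ ε₀ : ℝ, 0 < ε₀ → ε₀ ≤ 1 / 2 →
    ∀ a b : ℝ, a < b →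
    ∀ (n : ℕ) (p : Polynomial ℝ), p.natDegree ≤ n →
    ∀ k : ℕ, 1 ≤ k → k ≤ n →
      (∫ x in Set.Icc a b, (iteratedDeriv k (fun y => p.eval y) x) ^ 2) ≤
        C ^ k * ((ε₀ * ((b + ε₀ * (b - a)) - (a - ε₀ * (b - a))) ^ 2) ^ k)⁻¹ *
          (n : ℝ) ^ (2 * k) *
          ∫ x in Set.Icc (a - ε₀ * (b - a)) (b + ε₀ * (b - a)), (p.eval x) ^ 2 := by
  refine ⟨12, by norm_num, fun ε hε hε' a b hab n p hp k _ hk => ?_⟩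
  have hab' : a - ε * (b - a) ≤ b + ε * (b - a) := by nlinarith
  simp only [MeasureTheory.integral_Icc_eq_integral_Ioc, ← intervalIntegral.integral_of_le hab.le,
    ← intervalIntegral.integral_of_le hab', L2Bernstein.iteratedDeriv_eval_eq]
  exact L2Bernstein.integral_iterate_derivative_sq_le_enlargement hp hk hε hε' hab
end

section
/- There exist absolute constants c₁, c₂ > 0 and x₀ > 0 such that for all real x ≥ x₀ the following hold. (i) If i is a positive integer with i = x² + t and L = |t|/x ≤ x^{1/3}, then c₁^{−1}·x^{−1/2}·exp(−c₁L²) ≤ e^{−x²/2}·x^i/√(i!) ≤ c₂^{−1}·x^{−1/2}·exp(−c₂L²). (ii) If L > 0 and i is a positive integer with i ≤ x² − Lx or i ≥ x² + Lx, then e^{−x²/2}·x^i/√(i!) ≤ c₂^{−1}·x^{−1/2}·exp(−c₂·min(L², x^{2/3})). -/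
/-!
Write `i = x² (1 + u)`. Stirling's formula `i! = sᵢ √(2i) (i/e)^i`, with `1 ≤ sᵢ ≤ 3`, turns the
term into `exp (-(x²/2) h(u)) / √(sᵢ √(2i))`, where `h(u) = (1 + u) log (1 + u) - u`, and the
denominator is comparable to `√x` as soon as `i` is comparable to `x²`. Since `x² u² = L²`, the
bounds `u²/4 ≤ h(u) ≤ u²` for `|u| ≤ 1` give the Gaussian profile in `L`; for `u > 1`
monotonicity gives `h(u) ≥ h(1) ≥ 1/4`, and for `i < x²/2` the factor `exp(-x²/32)` pays for
the missing `1/√x`.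
-/

open Real Set Stirling

noncomputable def weylTerm (x : ℝ) (i : ℕ) : ℝ :=
  exp (-(x ^ 2) / 2) * x ^ i / √(Nat.factorial i)

/-- The Cramér rate function of the Poisson law: `weylTerm x i ^ 2` is the Poisson(`x²`) mass
of `i`, which is `exp (-x² * poissonRate (i / x² - 1))` up to polynomial factors. -/
noncomputable def poissonRate (u : ℝ) : ℝ := (1 + u) * log (1 + u) - u

theorem one_le_stirlingSeq {n : ℕ} (hn : n ≠ 0) : 1 ≤ stirlingSeq n :=
  (one_le_sqrt.2 (by linarith [pi_gt_three])).trans (sqrt_pi_le_stirlingSeq hn)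

theorem stirlingSeq_le_three {n : ℕ} (hn : n ≠ 0) : stirlingSeq n ≤ 3 := by
  obtain ⟨m, rfl⟩ := Nat.exists_eq_succ_of_ne_zero hn
  calc stirlingSeq (m + 1) ≤ stirlingSeq 1 := stirlingSeq'_antitone (Nat.zero_le m)
    _ = exp 1 / √2 := stirlingSeq_one
    _ ≤ exp 1 := div_le_self (exp_pos 1).le (one_le_sqrt.2 one_le_two)
    _ ≤ 3 := exp_one_lt_three.le

theorem hasDerivAt_poissonRate {u : ℝ} (hu : -1 < u) :
    HasDerivAt poissonRate (log (1 + u)) u := by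
  have hu' : 1 + u ≠ 0 := by linarith
  have h := (hasDerivAt_id u).const_add 1
  refine ((h.mul (h.log hu')).sub (hasDerivAt_id u)).congr_deriv ?_
  simp only [id, one_mul, mul_one_div_cancel hu']
  ring

theorem poissonRate_le_sq {u : ℝ} (hu : -1 < u) : poissonRate u ≤ u ^ 2 := by
  have hlog : log (1 + u) ≤ u := by linarith [log_le_sub_one_of_pos (x := 1 + u) (by linarith)]
  have := mul_le_mul_of_nonneg_left hlog (by linarith : (0 : ℝ) ≤ 1 + u)
  unfold poissonRate
  nlinarith

theorem sq_div_four_le_poissonRate {u : ℝ} (hu₀ : -1 < u) (hu₁ : u ≤ 1) :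
    u ^ 2 / 4 ≤ poissonRate u := by
  set g : ℝ → ℝ := fun v => poissonRate v - v ^ 2 / 4
  have hg : ∀ v, -1 < v → HasDerivAt g (log (1 + v) - v / 2) v := fun v hv =>
    ((hasDerivAt_poissonRate hv).sub ((hasDerivAt_pow 2 v).div_const 4)).congr_deriv (by ring)
  have hmin : IsMinOn g (Ioc (-1) 1) 0 := by
    refine isMinOn_Ioc_of_deriv (hg 0 (by norm_num)).continuousAt
      (hg 1 (by norm_num)).continuousAt
      (fun v hv => (hg v hv.1).differentiableAt.differentiableWithinAt)
      (fun v hv => (hg v (by linarith [hv.1])).differentiableAt.differentiableWithinAt)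
      (fun v hv => ?_) (fun v hv => ?_)
    · rw [(hg v hv.1).deriv]
      linarith [log_le_sub_one_of_pos (x := 1 + v) (by linarith [hv.1]), hv.2]
    · obtain ⟨hv₀, hv₁⟩ := hv
      rw [(hg v (by linarith)).deriv]
      have hinv : (1 + v) * (1 + v)⁻¹ = 1 := mul_inv_cancel₀ (by linarith)
      have hpos : 0 < (1 + v)⁻¹ := by positivity
      nlinarith [one_sub_inv_le_log_of_pos (x := 1 + v) (by linarith)]
  simpa [g, poissonRate] using isMinOn_iff.1 hmin u ⟨hu₀, hu₁⟩

theorem monotoneOn_poissonRate : MonotoneOn poissonRate (Ici 0) := by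
  refine monotoneOn_of_hasDerivWithinAt_nonneg (f' := fun u => log (1 + u)) (convex_Ici 0)
    (fun u hu =>
      (hasDerivAt_poissonRate (by linarith [mem_Ici.1 hu])).continuousAt.continuousWithinAt)
    (fun u hu => ?_) (fun u hu => ?_) <;> rw [interior_Ici, mem_Ioi] at hu
  · exact (hasDerivAt_poissonRate (by linarith)).hasDerivWithinAt
  · exact log_nonneg (by linarith)

theorem min_sq_one_div_four_le_poissonRate {u : ℝ} (hu : -1 < u) :
    min (u ^ 2) 1 / 4 ≤ poissonRate u := by
  rcases le_or_gt u 1 with hu₁ | hu₁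
  · exact (div_le_div_of_nonneg_right (min_le_left _ _) (by norm_num)).trans
      (sq_div_four_le_poissonRate hu hu₁)
  · calc min (u ^ 2) 1 / 4 ≤ 1 ^ 2 / 4 := by gcongr; simp
      _ ≤ poissonRate 1 := sq_div_four_le_poissonRate (by norm_num) le_rfl
      _ ≤ poissonRate u := monotoneOn_poissonRate (by norm_num) (mem_Ici.2 (by linarith)) hu₁.le

theorem weylTerm_eq {x : ℝ} (hx : 0 < x) {i : ℕ} (hi : i ≠ 0) :
    weylTerm x i =
      exp (-(x ^ 2 / 2) * poissonRate (i / x ^ 2 - 1)) / √(stirlingSeq i * √(2 * i)) := by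
  have hi' : (0 : ℝ) < i := by positivity
  have hfac : (Nat.factorial i : ℝ) = stirlingSeq i * √(2 * i) * exp (i * (log i - 1)) := by
    rw [exp_nat_mul, exp_sub, exp_log hi', stirlingSeq, mul_assoc, div_mul_cancel₀]
    positivity
  have hpow : x ^ i = exp (i * log x) := by rw [exp_nat_mul, exp_log hx]
  have hlog : log (i / x ^ 2) = log i - 2 * log x := by
    rw [log_div hi'.ne' (by positivity), log_pow]; push_cast; ring
  have hS : 0 ≤ stirlingSeq i * √(2 * i) := by
    have := one_le_stirlingSeq hi; positivity
  rw [weylTerm, hfac, sqrt_mul hS, ← exp_half, hpow, div_mul_eq_div_div_swap, ← exp_add,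
    ← exp_sub, poissonRate, add_sub_cancel, hlog]
  congr 2
  field_simp
  ring

theorem weylTerm_le_exp {x : ℝ} (hx : 0 < x) {i : ℕ} (hi : i ≠ 0) :
    weylTerm x i ≤ exp (-(x ^ 2 / 2) * poissonRate (i / x ^ 2 - 1)) := by
  rw [weylTerm_eq hx hi]
  refine div_le_self (exp_pos _).le (one_le_sqrt.2 ?_)
  have h2i : 1 ≤ √(2 * i) := one_le_sqrt.2 (by norm_cast; omega)
  nlinarith [one_le_stirlingSeq hi]

theorem weylTerm_le_exp_div_sqrt {x : ℝ} (hx : 0 < x) {i : ℕ} (hi : x ^ 2 ≤ 2 * i) :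
    weylTerm x i ≤ exp (-(x ^ 2 / 2) * poissonRate (i / x ^ 2 - 1)) / √x := by
  have hi₀ : i ≠ 0 := by rintro rfl; norm_num at hi; nlinarith
  rw [weylTerm_eq hx hi₀]
  gcongr
  have h2i : x ≤ √(2 * i) := (le_sqrt hx.le (by positivity)).2 hi
  nlinarith [one_le_stirlingSeq hi₀]

theorem exp_div_three_mul_sqrt_le_weylTerm {x : ℝ} (hx : 0 < x) {i : ℕ} (hi₀ : i ≠ 0)
    (hi : i ≤ 2 * x ^ 2) :
    exp (-(x ^ 2 / 2) * poissonRate (i / x ^ 2 - 1)) / (3 * √x) ≤ weylTerm x i := by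
  rw [weylTerm_eq hx hi₀]
  have h2i : √(2 * i) ≤ 2 * x := (sqrt_le_left (by positivity)).2 (by nlinarith)
  have hS : stirlingSeq i * √(2 * i) ≤ (3 * √x) ^ 2 := by
    rw [mul_pow, sq_sqrt hx.le]
    nlinarith [stirlingSeq_le_three hi₀, sqrt_nonneg (2 * i)]
  have := one_le_stirlingSeq hi₀
  gcongr
  exact (sqrt_le_left (by positivity)).2 hS

theorem weylTerm_bounds_of_abs_le {x : ℝ} (hx : 0 < x) {i : ℕ}
    (hu : |(i : ℝ) / x ^ 2 - 1| ≤ 1 / 2) :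
    exp (-(x ^ 2 * (i / x ^ 2 - 1) ^ 2) / 2) / (3 * √x) ≤ weylTerm x i ∧
      weylTerm x i ≤ exp (-(x ^ 2 * (i / x ^ 2 - 1) ^ 2) / 8) / √x := by
  set u : ℝ := i / x ^ 2 - 1 with hu_def
  obtain ⟨hu₀, hu₁⟩ := abs_le.1 hu
  have hi : (i : ℝ) = x ^ 2 * (1 + u) := by rw [hu_def]; field_simp; ring
  have hx2 : 0 < x ^ 2 := by positivity
  have hi₀ : i ≠ 0 := by
    have : (0 : ℝ) < i := hi ▸ mul_pos hx2 (by linarith)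
    exact_mod_cast this.ne'
  constructor
  · refine le_trans ?_ (exp_div_three_mul_sqrt_le_weylTerm hx hi₀ (by nlinarith))
    gcongr
    nlinarith [poissonRate_le_sq (u := u) (by linarith)]
  · refine (weylTerm_le_exp_div_sqrt hx (by nlinarith)).trans ?_
    gcongr
    nlinarith [sq_div_four_le_poissonRate (u := u) (by linarith) (by linarith)]

theorem rpow_one_third_le_half_self {x : ℝ} (hx : 8 ≤ x) : x ^ ((1 : ℝ) / 3) ≤ x / 2 := by
  set y := x ^ ((1 : ℝ) / 3)
  have hy : y ^ 3 = x := by rw [← rpow_natCast, ← rpow_mul (by linarith)]; norm_num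
  have hy₀ : 0 ≤ y := rpow_nonneg (by linarith) _
  have hy₂ : 2 ≤ y := by nlinarith [sq_nonneg (y - 2), sq_nonneg y]
  nlinarith [mul_nonneg hy₀ (by nlinarith : 0 ≤ y ^ 2 - 2)]

theorem sqrt_mul_exp_neg_sq_le {x : ℝ} (hx : 36 ≤ x) :
    √x * exp (-(x ^ 2 / 32)) ≤ exp (-(x / 8)) := by
  have hsqrt : √x ≤ exp x := by
    have : √x ≤ x := (sqrt_le_left (by linarith)).2 (by nlinarith)
    linarith [add_one_le_exp x]
  calc √x * exp (-(x ^ 2 / 32)) ≤ exp x * exp (-(x ^ 2 / 32)) := by gcongr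
    _ ≤ exp (-(x / 8)) := by rw [← exp_add]; gcongr; nlinarith

theorem weylTerm_near_bounds {x : ℝ} (hx : 8 ≤ x) {i : ℕ}
    (hi : |(i : ℝ) - x ^ 2| / x ≤ x ^ ((1 : ℝ) / 3)) :
    3⁻¹ * (√x)⁻¹ * exp (-3 * (|(i : ℝ) - x ^ 2| / x) ^ 2) ≤ weylTerm x i ∧
      weylTerm x i ≤ 8 * (√x)⁻¹ * exp (-(1 / 8) * (|(i : ℝ) - x ^ 2| / x) ^ 2) := by
  have hx₀ : 0 < x := by linarith
  have hu : (i : ℝ) / x ^ 2 - 1 = ((i : ℝ) - x ^ 2) / x ^ 2 := by field_simp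
  have habs : |(i : ℝ) / x ^ 2 - 1| ≤ 1 / 2 := by
    have := (div_le_iff₀ hx₀).1 (hi.trans (rpow_one_third_le_half_self hx))
    rw [hu, abs_div, abs_of_pos (by positivity : (0 : ℝ) < x ^ 2), div_le_iff₀ (by positivity)]
    linarith
  set L := |(i : ℝ) - x ^ 2| / x with hL
  have hsq : x ^ 2 * ((i : ℝ) / x ^ 2 - 1) ^ 2 = L ^ 2 := by
    rw [hu, hL, div_pow, div_pow, sq_abs]; field_simp
  obtain ⟨hlow, hup⟩ := weylTerm_bounds_of_abs_le hx₀ habs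
  rw [hsq] at hlow hup
  constructor
  · calc 3⁻¹ * (√x)⁻¹ * exp (-3 * L ^ 2) = exp (-3 * L ^ 2) / (3 * √x) := by ring
      _ ≤ exp (-L ^ 2 / 2) / (3 * √x) := by gcongr; nlinarith [sq_nonneg L]
      _ ≤ weylTerm x i := hlow
  · calc weylTerm x i ≤ exp (-L ^ 2 / 8) / √x := hup
      _ = 1 * (√x)⁻¹ * exp (-(1 / 8) * L ^ 2) := by ring_nf
      _ ≤ 8 * (√x)⁻¹ * exp (-(1 / 8) * L ^ 2) := by gcongr; norm_num

theorem weylTerm_far_le {x L : ℝ} (hx : 36 ≤ x) (hL : 0 ≤ L) {i : ℕ} (hi : 0 < i)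
    (hfar : (i : ℝ) ≤ x ^ 2 - L * x ∨ x ^ 2 + L * x ≤ i) :
    weylTerm x i ≤ 8 * (√x)⁻¹ * exp (-(1 / 8) * min (L ^ 2) (x ^ ((2 : ℝ) / 3))) := by
  have hx₀ : 0 < x := by linarith
  have hx2 : 0 < x ^ 2 := by positivity
  set u : ℝ := i / x ^ 2 - 1 with hu_def
  have hi_eq : (i : ℝ) = x ^ 2 * (1 + u) := by rw [hu_def]; field_simp; ring
  have hu : -1 < u := by
    have : (0 : ℝ) < i := by exact_mod_cast hi
    nlinarith
  have hLu : L ^ 2 ≤ x ^ 2 * u ^ 2 := by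
    have : L ≤ x * |u| := by
      rcases hfar with h | h
      · rw [hi_eq] at h
        rw [abs_of_nonpos (by nlinarith)]; nlinarith
      · rw [hi_eq] at h
        rw [abs_of_nonneg (by nlinarith)]; nlinarith
    simpa [mul_pow] using pow_le_pow_left₀ hL this 2
  have h23 : x ^ ((2 : ℝ) / 3) ≤ x := by
    simpa using rpow_le_rpow_of_exponent_le (by linarith : 1 ≤ x) (by norm_num : (2 : ℝ) / 3 ≤ 1)
  set m := min (L ^ 2) (x ^ ((2 : ℝ) / 3))
  have hm : m ≤ x := (min_le_right _ _).trans h23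
  suffices weylTerm x i ≤ (√x)⁻¹ * exp (-(1 / 8) * m) from
    this.trans (by rw [mul_assoc]; exact le_mul_of_one_le_left (by positivity) (by norm_num))
  rcases le_or_gt (x ^ 2) (2 * i) with hi₂ | hi₂
  · rw [← div_eq_inv_mul]
    refine (weylTerm_le_exp_div_sqrt hx₀ hi₂).trans ?_
    rw [← hu_def]
    refine div_le_div_of_nonneg_right (exp_le_exp.2 ?_) (sqrt_nonneg x)
    have hmin : m ≤ x ^ 2 * min (u ^ 2) 1 := by
      rw [mul_min_of_nonneg _ _ hx2.le, mul_one]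
      exact min_le_min hLu (by nlinarith)
    nlinarith [min_sq_one_div_four_le_poissonRate hu]
  · have hu₂ : u < -1 / 2 := by nlinarith
    calc weylTerm x i ≤ exp (-(x ^ 2 / 2) * poissonRate u) := weylTerm_le_exp hx₀ hi.ne'
      _ ≤ exp (-(x ^ 2 / 32)) := by
          gcongr; nlinarith [sq_div_four_le_poissonRate hu (by linarith)]
      _ ≤ (√x)⁻¹ * exp (-(x / 8)) := by
          rw [← div_eq_inv_mul, le_div_iff₀' (by positivity)]; exact sqrt_mul_exp_neg_sq_le hx
      _ ≤ (√x)⁻¹ * exp (-(1 / 8) * m) := by gcongr; linarith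

/-- pointwise size estimates for the terms `e^{−x²/2} xⁱ/√(i!)` of the
normalized Weyl polynomial (here `L = |i − x²|/x`). -/
theorem weyl_term_size :
    ∃ c₁ c₂ x₀ : ℝ, 0 < c₁ ∧ 0 < c₂ ∧ 0 < x₀ ∧
    ∀ x : ℝ, x₀ ≤ x →
      (∀ i : ℕ, 0 < i → |(i : ℝ) - x ^ 2| / x ≤ x ^ ((1 : ℝ) / 3) →
        c₁⁻¹ * x ^ (-(1 : ℝ) / 2) * Real.exp (-c₁ * (|(i : ℝ) - x ^ 2| / x) ^ 2) ≤
            Real.exp (-(x ^ 2) / 2) * x ^ i / Real.sqrt (Nat.factorial i) ∧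
          Real.exp (-(x ^ 2) / 2) * x ^ i / Real.sqrt (Nat.factorial i) ≤
            c₂⁻¹ * x ^ (-(1 : ℝ) / 2) * Real.exp (-c₂ * (|(i : ℝ) - x ^ 2| / x) ^ 2)) ∧
      (∀ L : ℝ, 0 < L → ∀ i : ℕ, 0 < i →
        ((i : ℝ) ≤ x ^ 2 - L * x ∨ x ^ 2 + L * x ≤ (i : ℝ)) →
        Real.exp (-(x ^ 2) / 2) * x ^ i / Real.sqrt (Nat.factorial i) ≤
          c₂⁻¹ * x ^ (-(1 : ℝ) / 2) *
            Real.exp (-c₂ * min (L ^ 2) (x ^ ((2 : ℝ) / 3)))) := by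
  refine ⟨3, 1 / 8, 36, by norm_num, by norm_num, by norm_num, fun x hx => ?_⟩
  rw [neg_div, rpow_neg (by linarith), ← sqrt_eq_rpow, show (1 / 8 : ℝ)⁻¹ = 8 by norm_num]
  exact ⟨fun i _ hi => weylTerm_near_bounds (by linarith) hi,
    fun L hL i hi hfar => weylTerm_far_le hx hL.le hi hfar⟩
end

section
/- For every constant A > 0 there exist constants C > 0 and x₀ > 0 such that for all real x ≥ x₀ the following holds. Let d be a nonnegative integer with d ≤ (log x)^A, and let i be a positive integer with i = x² + Lx where |L| ≤ x/2. Then the d-th derivative (in x) of the function x ↦ e^{−x²/2}·x^i/√(i!) satisfies |(e^{−x²/2}·x^i/√(i!))^{(d)}| ≤ C·d!·(1+|L|)^d · e^{−x²/2}·x^i/√(i!). -/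
/-!
The function `z ↦ exp (-z²/2) z^i / √(i!)` is entire, so Cauchy's estimate on the circle of
radius `R = 1/(1 + |L|)` around `x` bounds its `d`-th derivative at `x` by `d! (1 + |L|)^d` times
its maximum modulus on that circle. On the circle the modulus exceeds the value at `x` by at most
a factor `e³`: writing `z = x + a + ib`, the bound `log (|z|/x) ≤ (|z|² - x²)/(2x²)` and
`i = x² + Lx` turn the log of the ratio into `b² + La + L(a² + b²)/(2x)`, and each term is at
most `1` because `(a² + b²)(1 + |L|)² = 1` and `|L| ≤ x/2`.
-/

open Metric

theorem iteratedDeriv_re_comp_ofReal {F : ℂ → ℂ} (hF : Differentiable ℂ F) (n : ℕ)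
    (x : ℝ) :
    iteratedDeriv n (fun y : ℝ => (F y).re) x = (iteratedDeriv n F x).re := by
  induction n generalizing F with
  | zero => simp
  | succ n ih =>
    have hderiv : deriv (fun y : ℝ => (F y).re) = fun y : ℝ => (deriv F y).re :=
      funext fun y => (hF y).hasDerivAt.real_of_complex.deriv
    rw [iteratedDeriv_succ', iteratedDeriv_succ', hderiv, ih hF.deriv]

theorem abs_iteratedDeriv_re_comp_ofReal_le {F : ℂ → ℂ} (hF : Differentiable ℂ F) (n : ℕ)
    (x : ℝ) {R C : ℝ} (hR : 0 < R) (hC : ∀ z ∈ sphere (x : ℂ) R, ‖F z‖ ≤ C) :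
    |iteratedDeriv n (fun y : ℝ => (F y).re) x| ≤ n.factorial * C / R ^ n := by
  rw [iteratedDeriv_re_comp_ofReal hF]
  exact (Complex.abs_re_le_norm _).trans
    (Complex.norm_iteratedDeriv_le_of_forall_mem_sphere_norm_le n hR hF.diffContOnCl hC)

theorem pow_le_pow_mul_exp {a b : ℝ} (ha : 0 ≤ a) (hb : 0 < b) (n : ℕ) :
    a ^ n ≤ b ^ n * Real.exp (n * (a ^ 2 - b ^ 2) / (2 * b ^ 2)) := by
  have hsq : (a / b) ^ 2 ≤ Real.exp ((a ^ 2 - b ^ 2) / b ^ 2) := by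
    convert Real.add_one_le_exp ((a ^ 2 - b ^ 2) / b ^ 2) using 1
    field_simp
    ring
  have hratio : (a / b) ^ n ≤ Real.exp (n * (a ^ 2 - b ^ 2) / (2 * b ^ 2)) := by
    refine (pow_le_pow_iff_left₀ (by positivity) (Real.exp_nonneg _) two_ne_zero).mp ?_
    calc ((a / b) ^ n) ^ 2 = ((a / b) ^ 2) ^ n := by ring
      _ ≤ Real.exp ((a ^ 2 - b ^ 2) / b ^ 2) ^ n := by gcongr
      _ = Real.exp (n * (a ^ 2 - b ^ 2) / (2 * b ^ 2)) ^ 2 := by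
        rw [← Real.exp_nat_mul, ← Real.exp_nat_mul]
        congr 1
        push_cast
        field_simp
  calc a ^ n = b ^ n * (a / b) ^ n := by rw [div_pow]; field_simp
    _ ≤ _ := by gcongr

theorem weyl_exponent_le {x L a b r : ℝ} (hx : 0 < x) (hL : |L| ≤ x / 2)
    (hab : a ^ 2 + b ^ 2 = r ^ 2) (hr : 0 ≤ r) (hrL : r * (1 + |L|) ≤ 1) :
    -((x + a) ^ 2 - b ^ 2) / 2 + (x ^ 2 + L * x) * ((x + a) ^ 2 + b ^ 2 - x ^ 2) / (2 * x ^ 2)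
      ≤ -x ^ 2 / 2 + 3 := by
  have hexpand : -((x + a) ^ 2 - b ^ 2) / 2
      + (x ^ 2 + L * x) * ((x + a) ^ 2 + b ^ 2 - x ^ 2) / (2 * x ^ 2)
      = -x ^ 2 / 2 + b ^ 2 + L * a + L / x * (r ^ 2 / 2) := by
    rw [← hab]; field_simp; ring
  have hr1 : r ≤ 1 := by nlinarith [abs_nonneg L]
  have hb : b ^ 2 ≤ 1 := by nlinarith [sq_nonneg a]
  have hLa : L * a ≤ 1 :=
    calc L * a ≤ |L| * |a| := by rw [← abs_mul]; exact le_abs_self _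
      _ ≤ |L| * r := by gcongr; exact abs_le_of_sq_le_sq (by nlinarith [sq_nonneg b]) hr
      _ ≤ 1 := by linarith
  have hLx : L / x ≤ 1 / 2 := by rw [div_le_iff₀ hx]; linarith [le_abs_self L]
  have hLxr : L / x * (r ^ 2 / 2) ≤ 1 := by nlinarith [sq_nonneg r]
  linarith

theorem norm_exp_neg_sq_half_mul_pow_le {x L : ℝ} {i : ℕ} (hx : 0 < x)
    (hi : (i : ℝ) = x ^ 2 + L * x) (hL : |L| ≤ x / 2) {z : ℂ}
    (hz : ‖z - x‖ * (1 + |L|) ≤ 1) :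
    ‖Complex.exp (-z ^ 2 / 2) * z ^ i‖ ≤ Real.exp 3 * (Real.exp (-x ^ 2 / 2) * x ^ i) := by
  set a := z.re - x
  set b := z.im
  have hre : z.re = x + a := by ring
  have hab : a ^ 2 + b ^ 2 = ‖z - x‖ ^ 2 := by
    rw [Complex.sq_norm, Complex.normSq_apply]; simp [a, b]; ring
  have hnorm : ‖z‖ ^ 2 = (x + a) ^ 2 + b ^ 2 := by
    rw [Complex.sq_norm, Complex.normSq_apply, hre]; ring
  have hgauss : ‖Complex.exp (-z ^ 2 / 2)‖ = Real.exp (-((x + a) ^ 2 - b ^ 2) / 2) := by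
    rw [Complex.norm_exp, ← hre]; simp [sq, b]
  have hexp := weyl_exponent_le hx hL hab (norm_nonneg _) hz
  rw [← hi, ← hnorm] at hexp
  calc ‖Complex.exp (-z ^ 2 / 2) * z ^ i‖
      = Real.exp (-((x + a) ^ 2 - b ^ 2) / 2) * ‖z‖ ^ i := by rw [norm_mul, norm_pow, hgauss]
    _ ≤ Real.exp (-((x + a) ^ 2 - b ^ 2) / 2)
          * (x ^ i * Real.exp (i * (‖z‖ ^ 2 - x ^ 2) / (2 * x ^ 2))) := by
        gcongr; exact pow_le_pow_mul_exp (norm_nonneg z) hx i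
    _ = x ^ i
          * Real.exp (-((x + a) ^ 2 - b ^ 2) / 2 + i * (‖z‖ ^ 2 - x ^ 2) / (2 * x ^ 2)) := by
        rw [Real.exp_add]; ring
    _ ≤ x ^ i * Real.exp (-x ^ 2 / 2 + 3) := by gcongr
    _ = Real.exp 3 * (Real.exp (-x ^ 2 / 2) * x ^ i) := by rw [Real.exp_add]; ring

theorem weyl_term_derivative_bound_general (A : ℝ) :
    ∃ C x₀ : ℝ, 0 < C ∧ 0 < x₀ ∧
    ∀ x : ℝ, x₀ ≤ x →
    ∀ d : ℕ, (d : ℝ) ≤ Real.log x ^ A →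
    ∀ i : ℕ, 0 < i → |((i : ℝ) - x ^ 2) / x| ≤ x / 2 →
      |iteratedDeriv d
          (fun y => Real.exp (-(y ^ 2) / 2) * y ^ i / Real.sqrt (Nat.factorial i)) x| ≤
        C * (Nat.factorial d) * (1 + |((i : ℝ) - x ^ 2) / x|) ^ d *
          (Real.exp (-(x ^ 2) / 2) * x ^ i / Real.sqrt (Nat.factorial i)) := by
  refine ⟨Real.exp 3, 1, Real.exp_pos 3, one_pos, fun x hx d _ i _ hL => ?_⟩
  have hx0 : 0 < x := one_pos.trans_le hx
  set L := ((i : ℝ) - x ^ 2) / x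
  have hi : (i : ℝ) = x ^ 2 + L * x := by simp only [L]; field_simp; ring
  set s := Real.sqrt (Nat.factorial i)
  set F : ℂ → ℂ := fun z => Complex.exp (-z ^ 2 / 2) * z ^ i / s
  have hF : Differentiable ℂ F := by fun_prop
  have hfun :
      (fun y : ℝ => Real.exp (-(y ^ 2) / 2) * y ^ i / s) = fun y : ℝ => (F y).re := by
    funext y
    simp only [F, ← Complex.ofReal_pow, ← Complex.ofReal_neg, ← Complex.ofReal_ofNat,
      ← Complex.ofReal_div, ← Complex.ofReal_exp, ← Complex.ofReal_mul, Complex.ofReal_re]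
  have hsphere : ∀ z ∈ sphere (x : ℂ) (1 + |L|)⁻¹,
      ‖F z‖ ≤ Real.exp 3 * (Real.exp (-x ^ 2 / 2) * x ^ i) / s := by
    intro z hz
    rw [mem_sphere_iff_norm] at hz
    have hbound := norm_exp_neg_sq_half_mul_pow_le hx0 hi hL (z := z)
      (by rw [hz, inv_mul_cancel₀ (by positivity)])
    simp only [F, norm_div, Complex.norm_real]
    rw [Real.norm_of_nonneg (Real.sqrt_nonneg _)]
    gcongr
  calc _ ≤ d.factorial * (Real.exp 3 * (Real.exp (-x ^ 2 / 2) * x ^ i) / s)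
          / (1 + |L|)⁻¹ ^ d := by
        rw [hfun]; exact abs_iteratedDeriv_re_comp_ofReal_le hF d x (by positivity) hsphere
    _ = _ := by rw [inv_pow, div_inv_eq_mul]; ring

/-- bound on high derivatives of the terms of the normalized Weyl
polynomial (here `L = (i − x²)/x`). -/
theorem weyl_term_derivative_bound (A : ℝ) (hA : 0 < A) :
    ∃ C x₀ : ℝ, 0 < C ∧ 0 < x₀ ∧
    ∀ x : ℝ, x₀ ≤ x →
    ∀ d : ℕ, (d : ℝ) ≤ Real.log x ^ A →
    ∀ i : ℕ, 0 < i → |((i : ℝ) - x ^ 2) / x| ≤ x / 2 →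
      |iteratedDeriv d
          (fun y => Real.exp (-(y ^ 2) / 2) * y ^ i / Real.sqrt (Nat.factorial i)) x| ≤
        C * (Nat.factorial d) * (1 + |((i : ℝ) - x ^ 2) / x|) ^ d *
          (Real.exp (-(x ^ 2) / 2) * x ^ i / Real.sqrt (Nat.factorial i)) :=
  weyl_term_derivative_bound_general A
end

section
/- Let x be a nonzero real number and let i, d be natural numbers. Define g : ℝ → ℝ near 0 by g(w) = (1 + w/x)^i · exp(−xw − w²/2). Then the d-th derivative of g at w = 0 equals Σ_{k=0}^d (−1)^k · binom(d,k) · He_k(x) · (i)_{d−k} · x^{−(d−k)}, where He_k is the k-th probabilists' Hermite polynomial and (i)_m = i·(i−1)⋯(i−m+1) denotes the falling factorial (equal to 0 when m > i). -/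
/-!
Write `g = e · p` with `p w = (1 + w/x)^i` and `e w = exp(−xw − w²/2)` and apply the Leibniz
rule. The derivatives of `p` are falling factorials times powers of `x⁻¹`. Completing the square,
`e w = exp(x²/2) · exp(−(w + x)²/2)` is a translated Gaussian, whose `k`-th derivative is
`(−1)^k He_k` times the Gaussian itself.
-/

open Polynomial

theorem iteratedDeriv_one_add_div_pow {𝕜 : Type*} [NontriviallyNormedField 𝕜] (x w : 𝕜)
    (i m : ℕ) :
    iteratedDeriv m (fun w : 𝕜 => (1 + w / x) ^ i) w =
      i.descFactorial m * x⁻¹ ^ m * (1 + w / x) ^ (i - m) := by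
  have h : (fun w : 𝕜 => (1 + w / x) ^ i) = fun w => (x⁻¹ * w + 1) ^ i := by
    ext w; ring
  rw [h, iteratedDeriv_comp_const_mul (f := fun y => (y + 1) ^ i) (by fun_prop),
    iteratedDeriv_comp_add_const m (· ^ i)]
  simp only [iteratedDeriv_pow]
  ring

theorem iteratedDeriv_exp_neg_mul_sub_sq_half (x w : ℝ) (k : ℕ) :
    iteratedDeriv k (fun w => Real.exp (-(x * w) - w ^ 2 / 2)) w =
      (-1) ^ k * aeval (w + x) (hermite k) * Real.exp (-(x * w) - w ^ 2 / 2) := by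
  have h : (fun w => Real.exp (-(x * w) - w ^ 2 / 2)) =
      fun w => Real.exp (x ^ 2 / 2) * Real.exp (-((w + x) ^ 2 / 2)) := by
    ext w; rw [← Real.exp_add]; ring_nf
  rw [h, iteratedDeriv_const_mul_field,
    congrFun (iteratedDeriv_comp_add_const k (fun y => Real.exp (-(y ^ 2 / 2))) x),
    iteratedDeriv_eq_iterate, deriv_gaussian_eq_hermite_mul_gaussian,
    mul_left_comm, mul_comm (Real.exp _), ← Real.exp_add]
  ring_nf

theorem deriv_weyl_generating_function_general (x : ℝ) (i d : ℕ) :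
    iteratedDeriv d (fun w : ℝ => (1 + w / x) ^ i * Real.exp (-(x * w) - w ^ 2 / 2)) 0 =
      ∑ k ∈ Finset.range (d + 1),
        (-1 : ℝ) ^ k * (d.choose k) * (aeval x (Polynomial.hermite k)) *
          (Nat.descFactorial i (d - k)) * x ^ (-((d - k : ℕ) : ℤ)) := by
  simp_rw [mul_comm ((1 + _ / x) ^ i)]
  rw [iteratedDeriv_fun_mul (by fun_prop) (by fun_prop)]
  refine Finset.sum_congr rfl fun k _ => ?_
  rw [iteratedDeriv_exp_neg_mul_sub_sq_half, iteratedDeriv_one_add_div_pow, zpow_neg,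
    zpow_natCast, inv_pow]
  simp only [zero_add, mul_zero, neg_zero, zero_div, zero_pow two_ne_zero, sub_self,
    Real.exp_zero, add_zero, one_pow]
  ring

/-- the `d`-th derivative at `w = 0` of
`g(w) = (1 + w/x)^i · exp(−xw − w²/2)` in terms of probabilists' Hermite polynomials and
falling factorials. -/
theorem deriv_weyl_generating_function (x : ℝ) (hx : x ≠ 0) (i d : ℕ) :
    iteratedDeriv d (fun w : ℝ => (1 + w / x) ^ i * Real.exp (-(x * w) - w ^ 2 / 2)) 0 =
      ∑ k ∈ Finset.range (d + 1),
        (-1 : ℝ) ^ k * (d.choose k) * (aeval x (Polynomial.hermite k)) *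
          (Nat.descFactorial i (d - k)) * x ^ (-((d - k : ℕ) : ℤ)) :=
  deriv_weyl_generating_function_general x i d
end
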